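/- arXiv:2209.14802 — 6 statements merged into one kernel-verified Lean document; each statement's English description precedes it below -/
import Mathlib

section
/- Let c > 0 be strictly positive edge weights on a graph G with terminal set T, with minimum T-Steiner cut weight γ. If the incidence vectors of the minimum-weight T-Steiner cuts span R^{E(G)}, then there exists a laminar family L of subsets of V(G) such that the cuts δ(S) for S ∈ L are minimum-weight T-Steiner cuts whose incidence vectors form a basis of R^{E(G)}. -/
open Classical

/-- Two sets intersect if `A ∩ B`, `A \ B`, `B \ A` are all nonempty. -/
def Intersecting {V : Type*} (A B : Set V) : Prop :=
  (A ∩ B).Nonempty ∧ (A \ B).Nonempty ∧ (B \ A).Nonempty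

/-- The edge `e` belongs to the cut `δ(S)`. -/
def InCut {V : Type*} (S : Set V) (e : Sym2 V) : Prop :=
  ∃ u v : V, e = s(u, v) ∧ u ∈ S ∧ v ∉ S

/-- `δ(S)` is a `T`-Steiner cut iff `T ∩ S ≠ ∅` and `T \ S ≠ ∅`. -/
def IsSteinerCut {V : Type*} (T S : Set V) : Prop :=
  (T ∩ S).Nonempty ∧ (T \ S).Nonempty

/-- The incidence vector of `δ(S)` in `ℝ^{E(G)}`. -/
noncomputable def chi {V : Type*} (G : SimpleGraph V) (S : Set V) : ↥G.edgeSet → ℝ :=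
  fun e => if InCut S e.val then 1 else 0

/-- The `c`-weight of the cut `δ(S)` in `G`. -/
noncomputable def cutWeight {V : Type*} [Fintype V] [DecidableEq V] (G : SimpleGraph V)
    (c : Sym2 V → ℤ) (S : Set V) : ℤ :=
  ∑ e ∈ G.edgeFinset, if InCut S e then c e else 0

/-- `δ(S)` is a root of `c`: a minimum `c`-weight `T`-Steiner cut in `G`. -/
def IsRoot {V : Type*} [Fintype V] [DecidableEq V] (G : SimpleGraph V) (T : Set V)
    (c : Sym2 V → ℤ) (S : Set V) : Prop :=
  IsSteinerCut T S ∧ ∀ S' : Set V, IsSteinerCut T S' → cutWeight G c S ≤ cutWeight G c S'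

/-- `c` are facet weights for `(G, T)`: strictly positive on edges, in minimum integer
form, and the incidence vectors of the roots span `ℝ^{E(G)}`. -/
def FacetWeights {V : Type*} [Fintype V] [DecidableEq V] (G : SimpleGraph V) (T : Set V)
    (c : Sym2 V → ℤ) : Prop :=
  (∀ e ∈ G.edgeSet, 0 < c e) ∧
  (∀ d : ℤ, (∀ e ∈ G.edgeSet, d ∣ c e) → IsUnit d) ∧
  Submodule.span ℝ (chi G '' {S : Set V | IsRoot G T c S}) = ⊤


lemma inCut_iff {V : Type*} (S : Set V) (u v : V) :
    InCut S s(u, v) ↔ ((u ∈ S ∧ v ∉ S) ∨ (v ∈ S ∧ u ∉ S)) := by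
  constructor
  · rintro ⟨a, b, hab, ha, hb⟩
    rw [Sym2.eq_iff] at hab
    rcases hab with ⟨h1, h2⟩ | ⟨h1, h2⟩ <;> subst h1 <;> subst h2
    · exact Or.inl ⟨ha, hb⟩
    · exact Or.inr ⟨ha, hb⟩
  · rintro (⟨h1, h2⟩ | ⟨h1, h2⟩)
    · exact ⟨u, v, rfl, h1, h2⟩
    · exact ⟨v, u, Sym2.eq_swap, h1, h2⟩

/-- `e` is an edge between `X` and `Y`. -/
def CrossEdge {V : Type*} (X Y : Set V) (e : Sym2 V) : Prop :=
  ∃ u v : V, e = s(u, v) ∧ ((u ∈ X ∧ v ∈ Y) ∨ (u ∈ Y ∧ v ∈ X))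

lemma crossEdge_iff {V : Type*} (X Y : Set V) (u v : V) :
    CrossEdge X Y s(u, v) ↔ ((u ∈ X ∧ v ∈ Y) ∨ (u ∈ Y ∧ v ∈ X)) := by
  constructor
  · rintro ⟨a, b, hab, h⟩
    rw [Sym2.eq_iff] at hab
    rcases hab with ⟨h1, h2⟩ | ⟨h1, h2⟩ <;> subst h1 <;> subst h2 <;> tauto
  · rintro h
    exact ⟨u, v, rfl, h⟩

lemma intersecting_comm {V : Type*} {A B : Set V} : Intersecting A B ↔ Intersecting B A := by
  unfold Intersecting
  rw [Set.inter_comm]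
  tauto

lemma not_intersecting_iff {V : Type*} {A B : Set V} :
    ¬ Intersecting A B ↔ (A ∩ B = ∅ ∨ A ⊆ B ∨ B ⊆ A) := by
  simp only [Intersecting, not_and_or, Set.not_nonempty_iff_eq_empty, Set.diff_eq_empty]

section Ring
variable {V : Type*} {R : Type*} [CommRing R]

lemma cut_identity_inter (S A : Set V) (w : R) (u v : V) :
    ((if InCut S s(u,v) then w else 0) + (if InCut A s(u,v) then w else 0))
    = (if InCut (S ∩ A) s(u,v) then w else 0) + (if InCut (S ∪ A) s(u,v) then w else 0)
      + 2 * (if CrossEdge (S \ A) (A \ S) s(u,v) then w else 0) := by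
  by_cases h1 : u ∈ S <;> by_cases h2 : v ∈ S <;> by_cases h3 : u ∈ A <;> by_cases h4 : v ∈ A <;>
    simp [inCut_iff, crossEdge_iff, h1, h2, h3, h4] <;> ring

lemma cut_identity_diff (S A : Set V) (w : R) (u v : V) :
    ((if InCut S s(u,v) then w else 0) + (if InCut A s(u,v) then w else 0))
    = (if InCut (S \ A) s(u,v) then w else 0) + (if InCut (A \ S) s(u,v) then w else 0)
      + 2 * (if CrossEdge (S ∩ A) ((S ∪ A)ᶜ) s(u,v) then w else 0) := by
  by_cases h1 : u ∈ S <;> by_cases h2 : v ∈ S <;> by_cases h3 : u ∈ A <;> by_cases h4 : v ∈ A <;>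
    simp [inCut_iff, crossEdge_iff, h1, h2, h3, h4] <;> ring
end Ring


lemma nocross {V : Type*} {C S A : Set V} (hCA : ¬ Intersecting C A)
    (hCS : ¬ Intersecting C S) (hSA : Intersecting S A) :
    ¬ Intersecting C (S ∩ A) ∧ ¬ Intersecting C (S ∪ A) ∧
      ¬ Intersecting C (S \ A) ∧ ¬ Intersecting C (A \ S) := by
  obtain ⟨⟨x, hxS, hxA⟩, ⟨y, hyS, hyA⟩, ⟨z, hzA, hzS⟩⟩ := hSA
  rw [not_intersecting_iff] at hCA hCS
  refine ⟨?_, ?_, ?_, ?_⟩ <;> rw [not_intersecting_iff] <;>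
    rcases hCA with h | h | h <;> rcases hCS with g | g | g <;>
    simp only [Set.eq_empty_iff_forall_notMem, Set.mem_inter_iff, Set.mem_union,
      Set.mem_diff, Set.subset_def] at * <;>
    aesop

lemma nocross_self_derived {V : Type*} (S A : Set V) :
    ¬ Intersecting A (S ∩ A) ∧ ¬ Intersecting A (S ∪ A) ∧
      ¬ Intersecting A (S \ A) ∧ ¬ Intersecting A (A \ S) := by
  refine ⟨?_, ?_, ?_, ?_⟩ <;> rw [not_intersecting_iff] <;>
    first
      | exact Or.inr (Or.inr Set.diff_subset)
      | aesop

lemma not_intersecting_self {V : Type*} (S : Set V) : ¬ Intersecting S S := by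
  rw [not_intersecting_iff]; right; left; rfl

lemma pair_choice {V : Type*} {T S A : Set V} (hS : IsSteinerCut T S)
    (hA : IsSteinerCut T A) :
    (IsSteinerCut T (S ∩ A) ∧ IsSteinerCut T (S ∪ A)) ∨
      (IsSteinerCut T (S \ A) ∧ IsSteinerCut T (A \ S)) := by
  obtain ⟨⟨x, hxT, hxS⟩, ⟨y, hyT, hyS⟩⟩ := hS
  obtain ⟨⟨x', hxT', hxA⟩, ⟨y', hyT', hyA⟩⟩ := hA
  by_cases ha : (T ∩ (S ∩ A)).Nonempty
  · by_cases he : (T \ (S ∪ A)).Nonempty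
    · left
      refine ⟨⟨ha, ⟨y, hyT, fun hy => hyS hy.1⟩⟩, ⟨⟨x, hxT, Or.inl hxS⟩, he⟩⟩
    · right
      -- T ⊆ S ∪ A
      have hsub : ∀ t ∈ T, t ∈ S ∨ t ∈ A := by
        intro t ht
        by_contra hc
        push_neg at hc
        exact he ⟨t, ht, fun h => h.elim hc.1 hc.2⟩
      refine ⟨⟨⟨y', hyT', ?_, hyA⟩ , ⟨y, hyT, fun hy => hyS hy.1⟩⟩,
        ⟨⟨y, hyT, ?_, hyS⟩, ⟨x, hxT, fun hx => hx.2 hxS⟩⟩⟩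
      · rcases hsub y' hyT' with h | h
        · exact h
        · exact absurd h hyA
      · rcases hsub y hyT with h | h
        · exact absurd h hyS
        · exact h
  · right
    have hna : ∀ t ∈ T, ¬ (t ∈ S ∧ t ∈ A) := by
      intro t ht hc
      exact ha ⟨t, ht, hc.1, hc.2⟩
    refine ⟨⟨⟨x, hxT, hxS, fun h => hna x hxT ⟨hxS, h⟩⟩, ⟨y, hyT, fun hy => hyS hy.1⟩⟩,
      ⟨⟨x', hxT', hxA, fun h => hna x' hxT' ⟨h, hxA⟩⟩, ⟨y', hyT', fun hy => hyA hy.1⟩⟩⟩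


section Lift
variable {V : Type*} {R : Type*} [CommRing R]

lemma cut_identity_inter' (S A : Set V) (w : Sym2 V → R) (e : Sym2 V) :
    ((if InCut S e then w e else 0) + (if InCut A e then w e else 0))
    = (if InCut (S ∩ A) e then w e else 0) + (if InCut (S ∪ A) e then w e else 0)
      + 2 * (if CrossEdge (S \ A) (A \ S) e then w e else 0) := by
  induction e using Sym2.inductionOn with
  | hf u v => exact cut_identity_inter S A (w s(u, v)) u v

lemma cut_identity_diff' (S A : Set V) (w : Sym2 V → R) (e : Sym2 V) :
    ((if InCut S e then w e else 0) + (if InCut A e then w e else 0))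
    = (if InCut (S \ A) e then w e else 0) + (if InCut (A \ S) e then w e else 0)
      + 2 * (if CrossEdge (S ∩ A) ((S ∪ A)ᶜ) e then w e else 0) := by
  induction e using Sym2.inductionOn with
  | hf u v => exact cut_identity_diff S A (w s(u, v)) u v

end Lift

section Weights
variable {V : Type*} [Fintype V] [DecidableEq V] (G : SimpleGraph V) (c : Sym2 V → ℤ)

lemma cutWeight_uncross_inter (S A : Set V) :
    cutWeight G c S + cutWeight G c A =
      cutWeight G c (S ∩ A) + cutWeight G c (S ∪ A)
        + 2 * ∑ e ∈ G.edgeFinset, (if CrossEdge (S \ A) (A \ S) e then c e else 0) := by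
  unfold cutWeight
  rw [← Finset.sum_add_distrib, Finset.mul_sum, ← Finset.sum_add_distrib,
    ← Finset.sum_add_distrib]
  exact Finset.sum_congr rfl fun e _ => cut_identity_inter' S A c e

lemma cutWeight_uncross_diff (S A : Set V) :
    cutWeight G c S + cutWeight G c A =
      cutWeight G c (S \ A) + cutWeight G c (A \ S)
        + 2 * ∑ e ∈ G.edgeFinset, (if CrossEdge (S ∩ A) ((S ∪ A)ᶜ) e then c e else 0) := by
  unfold cutWeight
  rw [← Finset.sum_add_distrib, Finset.mul_sum, ← Finset.sum_add_distrib,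
    ← Finset.sum_add_distrib]
  exact Finset.sum_congr rfl fun e _ => cut_identity_diff' S A c e

end Weights

section Uncross
variable {V : Type*} [Fintype V] [DecidableEq V] {G : SimpleGraph V} {T : Set V}
  {c : Sym2 V → ℤ}

lemma uncross (hpos : ∀ e ∈ G.edgeSet, 0 < c e) {S A : Set V}
    (hS : IsRoot G T c S) (hA : IsRoot G T c A) (hSA : Intersecting S A) :
    ∃ P1 P2 : Set V, IsRoot G T c P1 ∧ IsRoot G T c P2 ∧
      (∀ C : Set V, ¬ Intersecting C A → ¬ Intersecting C S →
        ¬ Intersecting C P1 ∧ ¬ Intersecting C P2) ∧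
      ¬ Intersecting A P1 ∧ ¬ Intersecting A P2 ∧
      (∀ x : ↥G.edgeSet, chi G S x + chi G A x = chi G P1 x + chi G P2 x) := by
  have hAS : cutWeight G c A = cutWeight G c S :=
    le_antisymm (hA.2 _ hS.1) (hS.2 _ hA.1)
  rcases pair_choice hS.1 hA.1 with ⟨hP1, hP2⟩ | ⟨hP1, hP2⟩
  · -- pair (S ∩ A, S ∪ A)
    set X : ℤ := ∑ e ∈ G.edgeFinset, (if CrossEdge (S \ A) (A \ S) e then c e else 0) with hX
    have hw := cutWeight_uncross_inter G c S A
    have h1 : cutWeight G c S ≤ cutWeight G c (S ∩ A) := hS.2 _ hP1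
    have h2 : cutWeight G c S ≤ cutWeight G c (S ∪ A) := hS.2 _ hP2
    have hterm : ∀ e ∈ G.edgeFinset,
        0 ≤ (if CrossEdge (S \ A) (A \ S) e then c e else 0) := by
      intro e he
      split
      · exact le_of_lt (hpos e (SimpleGraph.mem_edgeFinset.mp he))
      · exact le_refl 0
    have hXnn : 0 ≤ X := Finset.sum_nonneg hterm
    have hX0 : X = 0 := by linarith [hX]
    have hc1 : cutWeight G c (S ∩ A) = cutWeight G c S := by linarith [hX]
    have hc2 : cutWeight G c (S ∪ A) = cutWeight G c S := by linarith [hX]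
    have hnocross : ∀ e ∈ G.edgeFinset, ¬ CrossEdge (S \ A) (A \ S) e := by
      intro e he hcr
      have h0 : (if CrossEdge (S \ A) (A \ S) e then c e else 0) = 0 :=
        (Finset.sum_eq_zero_iff_of_nonneg hterm).mp hX0 e he
      rw [if_pos hcr] at h0
      exact absurd h0 (ne_of_gt (hpos e (SimpleGraph.mem_edgeFinset.mp he)))
    refine ⟨S ∩ A, S ∪ A, ⟨hP1, fun S' h' => hc1 ▸ hS.2 S' h'⟩,
      ⟨hP2, fun S' h' => hc2 ▸ hS.2 S' h'⟩,
      fun C hCA hCS => ⟨(nocross hCA hCS hSA).1, (nocross hCA hCS hSA).2.1⟩,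
      (nocross_self_derived S A).1, (nocross_self_derived S A).2.1, ?_⟩
    intro x
    have hx : x.val ∈ G.edgeFinset := SimpleGraph.mem_edgeFinset.mpr x.2
    have := cut_identity_inter' (R := ℝ) S A (fun _ => (1 : ℝ)) x.val
    rw [if_neg (hnocross x.val hx)] at this
    simpa [chi] using this
  · -- pair (S \ A, A \ S)
    set X : ℤ := ∑ e ∈ G.edgeFinset, (if CrossEdge (S ∩ A) ((S ∪ A)ᶜ) e then c e else 0)
      with hX
    have hw := cutWeight_uncross_diff G c S A
    have h1 : cutWeight G c S ≤ cutWeight G c (S \ A) := hS.2 _ hP1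
    have h2 : cutWeight G c S ≤ cutWeight G c (A \ S) := hS.2 _ hP2
    have hterm : ∀ e ∈ G.edgeFinset,
        0 ≤ (if CrossEdge (S ∩ A) ((S ∪ A)ᶜ) e then c e else 0) := by
      intro e he
      split
      · exact le_of_lt (hpos e (SimpleGraph.mem_edgeFinset.mp he))
      · exact le_refl 0
    have hXnn : 0 ≤ X := Finset.sum_nonneg hterm
    have hX0 : X = 0 := by linarith [hX]
    have hc1 : cutWeight G c (S \ A) = cutWeight G c S := by linarith [hX]
    have hc2 : cutWeight G c (A \ S) = cutWeight G c S := by linarith [hX]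
    have hnocross : ∀ e ∈ G.edgeFinset, ¬ CrossEdge (S ∩ A) ((S ∪ A)ᶜ) e := by
      intro e he hcr
      have h0 : (if CrossEdge (S ∩ A) ((S ∪ A)ᶜ) e then c e else 0) = 0 :=
        (Finset.sum_eq_zero_iff_of_nonneg hterm).mp hX0 e he
      rw [if_pos hcr] at h0
      exact absurd h0 (ne_of_gt (hpos e (SimpleGraph.mem_edgeFinset.mp he)))
    refine ⟨S \ A, A \ S, ⟨hP1, fun S' h' => hc1 ▸ hS.2 S' h'⟩,
      ⟨hP2, fun S' h' => hc2 ▸ hS.2 S' h'⟩,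
      fun C hCA hCS => ⟨(nocross hCA hCS hSA).2.2.1, (nocross hCA hCS hSA).2.2.2⟩,
      (nocross_self_derived S A).2.2.1, (nocross_self_derived S A).2.2.2, ?_⟩
    intro x
    have hx : x.val ∈ G.edgeFinset := SimpleGraph.mem_edgeFinset.mpr x.2
    have := cut_identity_diff' (R := ℝ) S A (fun _ => (1 : ℝ)) x.val
    rw [if_neg (hnocross x.val hx)] at this
    simpa [chi] using this

end Uncross

section Main
variable {V : Type*} [Fintype V] [DecidableEq V] {G : SimpleGraph V} {T : Set V}
  {c : Sym2 V → ℤ}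

/-- One improvement step: a good laminar family whose span misses some root
can be improved. -/
lemma step (hpos : ∀ e ∈ G.edgeSet, 0 < c e) (L : Set (Set V))
    (hlam : ∀ A ∈ L, ∀ B ∈ L, ¬ Intersecting A B)
    (hroots : ∀ S ∈ L, IsRoot G T c S)
    (hbad : ∃ S : Set V, IsRoot G T c S ∧ chi G S ∉ Submodule.span ℝ (chi G '' L)) :
    ∃ S₀ : Set V, IsRoot G T c S₀ ∧ chi G S₀ ∉ Submodule.span ℝ (chi G '' L) ∧
      ∀ A ∈ L, ¬ Intersecting A S₀ := by
  set W := Submodule.span ℝ (chi G '' L) with hW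
  set Bad := {n : ℕ | ∃ S : Set V, IsRoot G T c S ∧ chi G S ∉ W ∧
    ({A ∈ L | Intersecting A S}).ncard = n} with hBad
  have hBadne : Bad.Nonempty := by
    obtain ⟨S, h1, h2⟩ := hbad
    exact ⟨_, S, h1, h2, rfl⟩
  obtain ⟨S₀, hroot, hnW, hcount⟩ := Nat.sInf_mem hBadne
  refine ⟨S₀, hroot, hnW, ?_⟩
  intro A hAL
  by_contra hint
  have hintSA : Intersecting S₀ A := intersecting_comm.mp hint
  obtain ⟨P1, P2, hP1, hP2, hCnc, hAnc1, hAnc2, hchi⟩ :=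
    uncross hpos hroot (hroots A hAL) hintSA
  have hfin : ({A' ∈ L | Intersecting A' S₀}).Finite := Set.toFinite _
  have hcnt : ∀ P : Set V, ¬ Intersecting A P →
      (∀ C, ¬ Intersecting C A → ¬ Intersecting C S₀ → ¬ Intersecting C P) →
      ({C ∈ L | Intersecting C P}).ncard < sInf Bad := by
    intro P hAP hCP
    have hss : {C ∈ L | Intersecting C P} ⊆ {C ∈ L | Intersecting C S₀} \ {A} := by
      rintro C ⟨hCL, hCint⟩
      refine ⟨⟨hCL, ?_⟩, ?_⟩
      · by_contra hno
        exact (hCP C (hlam C hCL A hAL) hno) hCint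
      · intro hCeq
        rw [Set.mem_singleton_iff] at hCeq
        subst hCeq
        exact hAP hCint
    calc ({C ∈ L | Intersecting C P}).ncard
        ≤ (({C ∈ L | Intersecting C S₀} \ {A})).ncard :=
          Set.ncard_le_ncard hss hfin.diff
      _ < ({C ∈ L | Intersecting C S₀}).ncard :=
          Set.ncard_diff_singleton_lt_of_mem ⟨hAL, hint⟩ hfin
      _ = sInf Bad := hcount
  have hPW : ∀ P : Set V, IsRoot G T c P →
      ({C ∈ L | Intersecting C P}).ncard < sInf Bad → chi G P ∈ W := by
    intro P hPr hlt
    by_contra hPn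
    have hmem : ({C ∈ L | Intersecting C P}).ncard ∈ Bad := ⟨P, hPr, hPn, rfl⟩
    exact absurd (Nat.sInf_le hmem) (not_le.mpr hlt)
  have h1 : chi G P1 ∈ W := hPW P1 hP1 (hcnt P1 hAnc1 fun C a b => (hCnc C a b).1)
  have h2 : chi G P2 ∈ W := hPW P2 hP2 (hcnt P2 hAnc2 fun C a b => (hCnc C a b).2)
  have hAW : chi G A ∈ W := Submodule.subset_span (Set.mem_image_of_mem _ hAL)
  have heq : chi G S₀ = chi G P1 + chi G P2 - chi G A := by
    funext x
    have h := hchi x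
    simp only [Pi.add_apply, Pi.sub_apply]
    linarith
  rw [heq] at hnW
  exact hnW (Submodule.sub_mem _ (Submodule.add_mem _ h1 h2) hAW)

end Main

/-- If the incidence vectors of the minimum-weight `T`-Steiner cuts of the strictly
positive weights `c` span `ℝ^{E(G)}`, then there is a laminar family `L` of subsets of
`V(G)` such that the cuts `δ(S)`, `S ∈ L`, are roots whose incidence vectors form a
basis of `ℝ^{E(G)}`. -/
theorem exists_laminar_root_basis {V : Type*} [Fintype V] [DecidableEq V]
    (G : SimpleGraph V) (hconn : G.Connected) (T : Set V) (hT : 2 ≤ T.ncard)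
    (c : Sym2 V → ℤ) (hpos : ∀ e ∈ G.edgeSet, 0 < c e)
    (hspan : Submodule.span ℝ (chi G '' {S : Set V | IsRoot G T c S}) = ⊤) :
    ∃ L : Set (Set V),
      (∀ A ∈ L, ∀ B ∈ L, ¬ Intersecting A B) ∧
      (∀ S ∈ L, IsRoot G T c S) ∧
      LinearIndependent ℝ (fun S : L => chi G S.val) ∧
      Submodule.span ℝ (chi G '' L) = ⊤ := by
  classical
  haveI : Finite ↥G.edgeSet := (Set.toFinite G.edgeSet).to_subtype
  haveI : Fintype ↥G.edgeSet := Fintype.ofFinite _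
  haveI : FiniteDimensional ℝ (↥G.edgeSet → ℝ) := inferInstance
  -- "good" families
  let Good : Set (Set V) → Prop := fun L =>
    (∀ A ∈ L, ∀ B ∈ L, ¬ Intersecting A B) ∧ (∀ S ∈ L, IsRoot G T c S) ∧
      (LinearIndependent ℝ (fun v : ↥(chi G '' L) => (v : ↥G.edgeSet → ℝ))) ∧
      Set.InjOn (chi G) L
  have hGoodEmpty : Good ∅ := by
    refine ⟨by simp, by simp, ?_, Set.injOn_empty _⟩
    rw [Set.image_empty]
    exact linearIndependent_empty ℝ _
  -- ranks of good families
  set N := {n : ℕ | ∃ L : Set (Set V), Good L ∧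
    n = Module.finrank ℝ (Submodule.span ℝ (chi G '' L))} with hN
  have hNne : N.Nonempty := ⟨_, ∅, hGoodEmpty, rfl⟩
  have hNbdd : BddAbove N := by
    refine ⟨Module.finrank ℝ (↥G.edgeSet → ℝ), ?_⟩
    rintro n ⟨L, _, rfl⟩
    exact Submodule.finrank_le _
  obtain ⟨L, hGoodL, hrank⟩ := Nat.sSup_mem hNne hNbdd
  obtain ⟨hlam, hroots, hindep, hinj⟩ := hGoodL
  -- L spans everything
  have hLspan : ∀ S : Set V, IsRoot G T c S →
      chi G S ∈ Submodule.span ℝ (chi G '' L) := by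
    intro S hS
    by_contra hnW
    obtain ⟨S₀, hroot, hnW₀, hnoint⟩ := step hpos L hlam hroots ⟨S, hS, hnW⟩
    -- insert S₀ into L
    have hnotimg : chi G S₀ ∉ chi G '' L := fun h => hnW₀ (Submodule.subset_span h)
    have hGood' : Good (insert S₀ L) := by
      refine ⟨?_, ?_, ?_, ?_⟩
      · rintro A (rfl | hA) B (rfl | hB)
        · exact not_intersecting_self _
        · exact fun h => hnoint B hB (intersecting_comm.mp h)
        · exact hnoint A hA
        · exact hlam A hA B hB
      · rintro S' (rfl | hS')
        · exact hroot
        · exact hroots S' hS'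
      · rw [Set.image_insert_eq]
        exact (linearIndepOn_id_insert hnotimg).mpr ⟨hindep, hnW₀⟩
      · rintro a (rfl | ha) b (rfl | hb) heq
        · rfl
        · exact absurd ⟨b, hb, heq.symm⟩ hnotimg
        · exact absurd ⟨a, ha, heq⟩ hnotimg
        · exact hinj ha hb heq
    -- rank increases
    have hmem' : chi G S₀ ∈ Submodule.span ℝ (chi G '' insert S₀ L) :=
      Submodule.subset_span (Set.mem_image_of_mem _ (Set.mem_insert _ _))
    have hle : Submodule.span ℝ (chi G '' L) ≤
        Submodule.span ℝ (chi G '' insert S₀ L) :=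
      Submodule.span_mono (Set.image_mono (Set.subset_insert _ _))
    have hlt : Submodule.span ℝ (chi G '' L) <
        Submodule.span ℝ (chi G '' insert S₀ L) :=
      lt_of_le_of_ne hle (fun h => hnW₀ (h.symm ▸ hmem'))
    have hrlt := Submodule.finrank_lt_finrank_of_lt hlt
    have : Module.finrank ℝ (Submodule.span ℝ (chi G '' insert S₀ L)) ∈ N :=
      ⟨insert S₀ L, hGood', rfl⟩
    have hb := le_csSup hNbdd this
    omega
  -- conclude span is top
  have hspanL : Submodule.span ℝ (chi G '' L) = ⊤ := by
    rw [eq_top_iff, ← hspan]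
    rw [Submodule.span_le]
    rintro _ ⟨S, hS, rfl⟩
    exact hLspan S hS
  refine ⟨L, hlam, hroots, ?_, hspanL⟩
  exact hindep.comp
    (fun S : L => (⟨chi G S.val, Set.mem_image_of_mem _ S.2⟩ : ↥(chi G '' L)))
    (fun S S' hSS => Subtype.ext (hinj S.2 S'.2 (congrArg Subtype.val hSS)))
end

section
/- Let δ(S) (S ∈ L) be a laminar root basis for facet weights c of a facet inducing Steiner graph (G, T). Then every inclusion-wise minimal member of L is a singleton {t} with t ∈ T. -/
open Classical

lemma reachable_ne_exists_adj {W : Type*} {H : SimpleGraph W} {u v : W}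
    (h : H.Reachable u v) (hne : u ≠ v) : ∃ y, H.Adj u y := by
  obtain ⟨w⟩ := h
  cases w with
  | nil => exact absurd rfl hne
  | cons h p => exact ⟨_, h⟩

/-- If `δ(S)` (`S ∈ L`) is a laminar root basis for facet weights `c` of a facet
inducing Steiner graph `(G, T)`, then every inclusion-wise minimal member of `L` is a
singleton `{t}` with `t ∈ T`. -/
theorem laminar_root_basis_minimal_singleton {V : Type*} [Fintype V] [DecidableEq V]
    (G : SimpleGraph V) (hconn : G.Connected) (T : Set V) (hT : 2 ≤ T.ncard)
    (c : Sym2 V → ℤ) (hfw : FacetWeights G T c)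
    (hrootconn : ∀ S : Set V, IsRoot G T c S →
      (G.induce S).Connected ∧ (G.induce Sᶜ).Connected)
    (L : Set (Set V))
    (hlam : ∀ A ∈ L, ∀ B ∈ L, ¬ Intersecting A B)
    (hroots : ∀ S ∈ L, IsRoot G T c S)
    (hindep : LinearIndependent ℝ (fun S : L => chi G S.val))
    (hspan : Submodule.span ℝ (chi G '' L) = ⊤) :
    ∀ S ∈ L, (∀ S' ∈ L, S' ⊆ S → S' = S) → ∃ t ∈ T, S = {t} := by

  intro S hS hmin
  obtain ⟨t, htT, htS⟩ := (hroots S hS).1.1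
  by_cases hsing : ∀ x ∈ S, x = t
  · refine ⟨t, htT, ?_⟩
    ext x
    constructor
    · intro hx; exact hsing x hx
    · intro hx; rw [hx]; exact htS
  · push_neg at hsing
    obtain ⟨x, hxS, hxt⟩ := hsing
    -- find an edge inside S
    have hconnS := (hrootconn S (hroots S hS)).1
    have hne : (⟨t, htS⟩ : ↥S) ≠ ⟨x, hxS⟩ := by
      intro h; exact hxt (congrArg Subtype.val h).symm
    obtain ⟨y, hadj⟩ :=
      reachable_ne_exists_adj (hconnS.preconnected ⟨t, htS⟩ ⟨x, hxS⟩) hne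
    set b : V := (y : V) with hbdef
    have hbS : b ∈ S := y.2
    have hab : G.Adj t b := hadj
    have he : s(t, b) ∈ G.edgeSet := hab
    -- every cut in L misses this edge
    have key : ∀ p q : V, p ∈ S → q ∈ S → ∀ A ∈ L, p ∈ A → q ∉ A → False := by
      intro p q hpS hqS A hA hpA hqA
      have hnint := hlam A hA S hS
      have hAS : A ⊆ S := by
        intro z hz
        by_contra hzS
        exact hnint ⟨⟨p, hpA, hpS⟩, ⟨z, hz, hzS⟩, ⟨q, hqS, hqA⟩⟩
      have : A = S := hmin A hA hAS
      exact hqA (this ▸ hqS)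
    have hzero : ∀ A ∈ L, ¬ InCut A (s(t, b)) := by
      rintro A hA ⟨u, v, heq, huA, hvA⟩
      rw [Sym2.eq_iff] at heq
      rcases heq with ⟨h1, h2⟩ | ⟨h1, h2⟩
      · exact key t b htS hbS A hA (h1 ▸ huA) (h2 ▸ hvA)
      · exact key b t hbS htS A hA (h2 ▸ huA) (h1 ▸ hvA)
    -- contradiction with spanning
    exfalso
    let idx : ↥G.edgeSet := ⟨s(t, b), he⟩
    have hM : Submodule.span ℝ (chi G '' L) ≤
        LinearMap.ker (LinearMap.proj idx : (↥G.edgeSet → ℝ) →ₗ[ℝ] ℝ) := by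
      rw [Submodule.span_le]
      rintro f ⟨A, hA, rfl⟩
      simp only [SetLike.mem_coe, LinearMap.mem_ker, LinearMap.proj_apply]
      show (if InCut A idx.val then (1:ℝ) else 0) = 0
      rw [if_neg (hzero A hA)]
    rw [hspan] at hM
    have h1 : ((fun _ => (1:ℝ)) : ↥G.edgeSet → ℝ) ∈
        LinearMap.ker (LinearMap.proj idx : (↥G.edgeSet → ℝ) →ₗ[ℝ] ℝ) :=
      hM Submodule.mem_top
    simp only [LinearMap.mem_ker, LinearMap.proj_apply] at h1
    exact one_ne_zero h1
end

section
/- Let c > 0 be edge weights on a graph G with terminal set T, let δ(S) be a minimum-weight T-Steiner cut (root) of c, and let w ∈ V(G) \ T be a non-terminal vertex. Then c(δ(w) ∩ δ(S)) ≤ c(δ(w) \ δ(S)). -/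
open Classical

lemma inCut_pair {V : Type*} (S : Set V) (a b : V) :
    InCut S s(a, b) ↔ (a ∈ S ∧ b ∉ S) ∨ (b ∈ S ∧ a ∉ S) := by
  constructor
  · rintro ⟨u, v, he, hu, hv⟩
    rw [Sym2.eq_iff] at he
    rcases he with ⟨rfl, rfl⟩ | ⟨rfl, rfl⟩ <;> tauto
  · rintro (⟨h1, h2⟩ | ⟨h1, h2⟩)
    · exact ⟨a, b, rfl, h1, h2⟩
    · exact ⟨b, a, Sym2.eq_swap, h1, h2⟩

/-- If `δ(S)` is a root of strictly positive weights `c` and `w ∉ T`, then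
`c(δ(w) ∩ δ(S)) ≤ c(δ(w) \ δ(S))`. -/
theorem root_star_weight_le {V : Type*} [Fintype V] [DecidableEq V]
    (G : SimpleGraph V) (T : Set V) (c : Sym2 V → ℤ)
    (hpos : ∀ e ∈ G.edgeSet, 0 < c e)
    (S : Set V) (hroot : IsRoot G T c S) (w : V) (hw : w ∉ T) :
    (∑ e ∈ G.edgeFinset, if w ∈ e ∧ InCut S e then c e else 0) ≤
      ∑ e ∈ G.edgeFinset, if w ∈ e ∧ ¬ InCut S e then c e else 0 := by
  classical
  obtain ⟨⟨hTS, hTS'⟩, hmin⟩ := hroot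
  set S' : Set V := if w ∈ S then S \ {w} else S ∪ {w} with hS'def
  have hmem : ∀ v, v ≠ w → (v ∈ S' ↔ v ∈ S) := by
    intro v hv
    by_cases h : w ∈ S <;> simp [hS'def, h, hv]
  have hwmem : w ∈ S' ↔ w ∉ S := by
    by_cases h : w ∈ S <;> simp [hS'def, h]
  have hcut : IsSteinerCut T S' := by
    constructor
    · obtain ⟨t, ht, hts⟩ := hTS
      exact ⟨t, ht, (hmem t (fun h => hw (h ▸ ht))).mpr hts⟩
    · obtain ⟨t, ht, hts⟩ := hTS'
      exact ⟨t, ht, fun h => hts ((hmem t (fun h' => hw (h' ▸ ht))).mp h)⟩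
  have hle := hmin S' hcut
  have hkey : ∀ e ∈ G.edgeFinset,
      (if InCut S' e then c e else 0) + (if w ∈ e ∧ InCut S e then c e else 0)
        = (if InCut S e then c e else 0) + (if w ∈ e ∧ ¬ InCut S e then c e else 0) := by
    intro e he
    rw [SimpleGraph.mem_edgeFinset] at he
    induction e using Sym2.inductionOn with
    | hf a b =>
      have hab : a ≠ b := G.ne_of_adj (by rwa [SimpleGraph.mem_edgeSet] at he)
      by_cases hwe : w ∈ s(a, b)
      · rw [Sym2.mem_iff] at hwe
        have flip : InCut S' s(a, b) ↔ ¬ InCut S s(a, b) := by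
          rw [inCut_pair, inCut_pair]
          rcases hwe with rfl | rfl
          · have hb := hmem b (Ne.symm hab)
            rw [hwmem, hb]
            by_cases h1 : w ∈ S <;> by_cases h2 : b ∈ S <;> simp [h1, h2]
          · have ha := hmem a hab
            rw [hwmem, ha]
            by_cases h1 : a ∈ S <;> by_cases h2 : w ∈ S <;> simp [h1, h2]
        have hwe' : w ∈ s(a, b) := by rw [Sym2.mem_iff]; exact hwe
        by_cases hc : InCut S s(a, b) <;>
          simp [hc, hwe', flip]
      · have same : InCut S' s(a, b) ↔ InCut S s(a, b) := by
          rw [Sym2.mem_iff] at hwe; push_neg at hwe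
          rw [inCut_pair, inCut_pair, hmem a (fun h => hwe.1 h.symm),
            hmem b (fun h => hwe.2 h.symm)]
        by_cases hc : InCut S s(a, b) <;> simp [hc, hwe, same]
  have key : cutWeight G c S' + (∑ e ∈ G.edgeFinset, if w ∈ e ∧ InCut S e then c e else 0)
      = cutWeight G c S + ∑ e ∈ G.edgeFinset, if w ∈ e ∧ ¬ InCut S e then c e else 0 := by
    unfold cutWeight
    rw [← Finset.sum_add_distrib, ← Finset.sum_add_distrib]
    exact Finset.sum_congr rfl hkey
  linarith [hle, key]
end

section
/- Let (G, T) be a facet inducing Steiner graph with facet weights c, and let w be a cut vertex of G. Let V₁ be the vertex set of a connected component of G \ w and V₂ the remaining vertices of G \ w. Let G₁, G₂ be the subgraphs induced by V₁ ∪ {w} and V₂ ∪ {w}, and set T₁ = (T ∩ V₁) ∪ {w}, T₂ = (T ∩ V₂) ∪ {w}. Then |T₁| ≥ 2 and |T₂| ≥ 2, and both (G₁, T₁) and (G₂, T₂) are facet inducing Steiner graphs whose facet weights are the minimum integer forms of the restrictions of c to E(G₁) and E(G₂). -/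
open Classical

section Aux
variable {V : Type*}

lemma incut_iff (S : Set V) (a b : V) :
    InCut S s(a, b) ↔ (a ∈ S ∧ b ∉ S) ∨ (b ∈ S ∧ a ∉ S) := by
  constructor
  · rintro ⟨u, v, he, hu, hv⟩
    rcases Sym2.eq_iff.mp he with ⟨rfl, rfl⟩ | ⟨rfl, rfl⟩
    · exact Or.inl ⟨hu, hv⟩
    · exact Or.inr ⟨hu, hv⟩
  · rintro (⟨hu, hv⟩ | ⟨hu, hv⟩)
    · exact ⟨a, b, rfl, hu, hv⟩
    · exact ⟨b, a, Sym2.eq_swap.symm, hu, hv⟩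

lemma incut_compl (S : Set V) (e : Sym2 V) : InCut Sᶜ e ↔ InCut S e := by
  induction e using Sym2.ind with
  | _ a b =>
    simp only [incut_iff, Set.mem_compl_iff, not_not]
    tauto

lemma steiner_compl (T S : Set V) : IsSteinerCut T Sᶜ ↔ IsSteinerCut T S := by
  have h1 : T ∩ Sᶜ = T \ S := (Set.diff_eq T S).symm
  have h2 : T \ Sᶜ = T ∩ S := by rw [Set.diff_eq, compl_compl]
  unfold IsSteinerCut
  rw [h1, h2]
  exact and_comm

variable [Fintype V] [DecidableEq V]

lemma cutWeight_compl (G : SimpleGraph V) (c : Sym2 V → ℤ) (S : Set V) :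
    cutWeight G c Sᶜ = cutWeight G c S :=
  Finset.sum_congr rfl fun e _ => if_congr (incut_compl S e) rfl rfl

lemma chi_compl (G : SimpleGraph V) (S : Set V) : chi G Sᶜ = chi G S := by
  funext e
  exact if_congr (incut_compl S e.val) rfl rfl

lemma isRoot_compl (G : SimpleGraph V) (T : Set V) (c : Sym2 V → ℤ) (S : Set V) :
    IsRoot G T c Sᶜ ↔ IsRoot G T c S := by
  unfold IsRoot
  rw [steiner_compl, cutWeight_compl]

lemma cutWeight_nonneg (G : SimpleGraph V) {c : Sym2 V → ℤ}
    (hc : ∀ e ∈ G.edgeSet, 0 < c e) (S : Set V) : 0 ≤ cutWeight G c S := by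
  apply Finset.sum_nonneg
  intro e he
  split
  · exact (hc e (SimpleGraph.mem_edgeFinset.mp he)).le
  · exact le_refl 0

lemma cutWeight_eq_zero_of (G : SimpleGraph V) (c : Sym2 V → ℤ) {S : Set V}
    (h : ∀ e ∈ G.edgeSet, ¬ InCut S e) : cutWeight G c S = 0 :=
  Finset.sum_eq_zero fun e he => if_neg (h e (SimpleGraph.mem_edgeFinset.mp he))

lemma cutWeight_pos (G : SimpleGraph V) {c : Sym2 V → ℤ}
    (hc : ∀ e ∈ G.edgeSet, 0 < c e) {S : Set V} {e₀ : Sym2 V}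
    (he₀ : e₀ ∈ G.edgeSet) (hcut : InCut S e₀) : 0 < cutWeight G c S := by
  have h1 : (if InCut S e₀ then c e₀ else 0) ≤ cutWeight G c S := by
    apply Finset.single_le_sum (f := fun e => if InCut S e then c e else 0)
    · intro e he
      split
      · exact (hc e (SimpleGraph.mem_edgeFinset.mp he)).le
      · exact le_refl 0
    · exact SimpleGraph.mem_edgeFinset.mpr he₀
  rw [if_pos hcut] at h1
  exact lt_of_lt_of_le (hc e₀ he₀) h1

lemma incut_not_of_le_zero (G : SimpleGraph V) {c : Sym2 V → ℤ}
    (hc : ∀ e ∈ G.edgeSet, 0 < c e) {S : Set V}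
    (h : cutWeight G c S ≤ 0) : ∀ e ∈ G.edgeSet, ¬ InCut S e :=
  fun e he hcut => absurd (cutWeight_pos G hc he hcut) (not_lt.mpr h)

lemma cutWeight_scale (G : SimpleGraph V) (c c' : Sym2 V → ℤ) (d : ℤ)
    (h : ∀ e ∈ G.edgeSet, c e = d * c' e) (S : Set V) :
    cutWeight G c S = d * cutWeight G c' S := by
  unfold cutWeight
  rw [Finset.mul_sum]
  refine Finset.sum_congr rfl fun e he => ?_
  rw [h e (SimpleGraph.mem_edgeFinset.mp he)]
  split <;> simp

lemma cutWeight_congr (G : SimpleGraph V) (c : Sym2 V → ℤ) {S S' : Set V}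
    (h : ∀ e ∈ G.edgeSet, InCut S e ↔ InCut S' e) :
    cutWeight G c S = cutWeight G c S' :=
  Finset.sum_congr rfl fun e he => if_congr (h e (SimpleGraph.mem_edgeFinset.mp he)) rfl rfl

lemma span_exists_ne_zero {ι : Type*} {s : Set (ι → ℝ)}
    (h : Submodule.span ℝ s = ⊤) (i : ι) : ∃ f ∈ s, f i ≠ 0 := by
  by_contra hcon
  push_neg at hcon
  have hle : Submodule.span ℝ s ≤ LinearMap.ker (LinearMap.proj (R := ℝ) (φ := fun _ : ι => ℝ) i) :=
    Submodule.span_le.mpr fun f hf => hcon f hf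
  rw [h] at hle
  have h1 : ((fun _ => (1:ℝ)) : ι → ℝ) ∈ LinearMap.ker (LinearMap.proj (R := ℝ) (φ := fun _ : ι => ℝ) i) :=
    hle trivial
  simp [LinearMap.mem_ker] at h1

end Aux


section Struct
variable {V : Type*} {G G₁ G₂ : SimpleGraph V} {w : V} {V₁ V₂ : Set V}

lemma exists_adj_w (hconn : G.Connected)
    (hdisj : ∀ v, v ∈ V₁ → v ∈ V₂ → False)
    (htri : ∀ v, v ∈ V₁ ∨ v = w ∨ v ∈ V₂)
    (hsep : ∀ a ∈ V₁, ∀ b ∈ V₂, ¬ G.Adj a b)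
    (hV₁ : V₁.Nonempty) (hV₂ : V₂.Nonempty) :
    ∃ a ∈ V₁, G.Adj a w := by
  obtain ⟨x, hx⟩ := hV₁
  obtain ⟨y, hy⟩ := hV₂
  have hw : ∀ (u z : V) (_ : G.Walk u z), u ∈ V₁ → z ∈ V₂ → ∃ a ∈ V₁, G.Adj a w := by
    intro u z p
    induction p with
    | nil => exact fun hu hz => absurd hz (fun h => hdisj _ hu h)
    | @cons a b _ h q ih =>
      intro ha hz
      rcases htri b with hb | rfl | hb
      · exact ih hb hz
      · exact ⟨a, ha, h⟩
      · exact absurd h (hsep a ha b hb)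
  obtain ⟨p⟩ := hconn.preconnected x y
  exact hw x y p hx hy

lemma induce_connected_side (hconn : G.Connected) (hwV₁ : w ∉ V₁)
    (htri : ∀ v, v ∈ V₁ ∨ v = w ∨ v ∈ V₂)
    (hsep : ∀ a ∈ V₁, ∀ b ∈ V₂, ¬ G.Adj a b)
    (hG₁ : ∀ a b : V, G₁.Adj a b ↔ (G.Adj a b ∧ a ∈ V₁ ∪ {w} ∧ b ∈ V₁ ∪ {w})) :
    (G₁.induce (V₁ ∪ {w})).Connected := by
  have key : ∀ (u z : V) (_ : G.Walk u z), z = w → ∀ hu : u ∈ V₁,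
      (G₁.induce (V₁ ∪ {w})).Reachable ⟨u, Or.inl hu⟩ ⟨w, Or.inr rfl⟩ := by
    intro u z p
    induction p with
    | nil => rintro rfl hu; exact absurd hu hwV₁
    | @cons a b _ h q ih =>
      intro hzw ha
      rcases htri b with hb | hbw | hb
      · have hadj : (G₁.induce (V₁ ∪ {w})).Adj ⟨a, Or.inl ha⟩ ⟨b, Or.inl hb⟩ := by
          simp only [SimpleGraph.comap_adj]
          exact (hG₁ a b).mpr ⟨h, Or.inl ha, Or.inl hb⟩
        exact hadj.reachable.trans (ih hzw hb)
      · have hbm : b ∈ V₁ ∪ {w} := Or.inr hbw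
        have hadj : (G₁.induce (V₁ ∪ {w})).Adj ⟨a, Or.inl ha⟩ ⟨b, hbm⟩ := by
          simp only [SimpleGraph.comap_adj]
          exact (hG₁ a b).mpr ⟨h, Or.inl ha, hbm⟩
        have heq : (⟨b, hbm⟩ : ↥(V₁ ∪ {w})) = ⟨w, Or.inr rfl⟩ := Subtype.ext hbw
        exact heq ▸ hadj.reachable
      · exact absurd h (hsep a ha b hb)
  have key2 : ∀ (x : ↥(V₁ ∪ {w})), (G₁.induce (V₁ ∪ {w})).Reachable x ⟨w, Or.inr rfl⟩ := by
    rintro ⟨u, hu | rfl⟩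
    · obtain ⟨p⟩ := hconn.preconnected u w
      exact key u w p rfl hu
    · exact SimpleGraph.Reachable.refl _
  rw [SimpleGraph.connected_iff]
  exact ⟨fun x y => (key2 x).trans (key2 y).symm, ⟨⟨w, Or.inr rfl⟩⟩⟩

lemma edge_cover
    (htri : ∀ v, v ∈ V₁ ∨ v = w ∨ v ∈ V₂)
    (hsep : ∀ a ∈ V₁, ∀ b ∈ V₂, ¬ G.Adj a b)
    (hG₁ : ∀ a b : V, G₁.Adj a b ↔ (G.Adj a b ∧ a ∈ V₁ ∪ {w} ∧ b ∈ V₁ ∪ {w}))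
    (hG₂ : ∀ a b : V, G₂.Adj a b ↔ (G.Adj a b ∧ a ∈ V₂ ∪ {w} ∧ b ∈ V₂ ∪ {w})) :
    ∀ e ∈ G.edgeSet, e ∈ G₁.edgeSet ∨ e ∈ G₂.edgeSet := by
  intro e he
  induction e using Sym2.ind with
  | _ u v =>
    rw [SimpleGraph.mem_edgeSet] at he
    rw [SimpleGraph.mem_edgeSet, SimpleGraph.mem_edgeSet, hG₁, hG₂]
    rcases htri u with hu | rfl | hu <;> rcases htri v with hv | rfl | hv
    · exact Or.inl ⟨he, Or.inl hu, Or.inl hv⟩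
    · exact Or.inl ⟨he, Or.inl hu, Or.inr rfl⟩
    · exact absurd he (hsep u hu v hv)
    · exact Or.inl ⟨he, Or.inr rfl, Or.inl hv⟩
    · exact absurd he (G.irrefl)
    · exact Or.inr ⟨he, Or.inr rfl, Or.inl hv⟩
    · exact absurd he.symm (hsep v hv u hu)
    · exact Or.inr ⟨he, Or.inl hu, Or.inr rfl⟩
    · exact Or.inr ⟨he, Or.inl hu, Or.inl hv⟩

lemma edge_disj (hwV₁ : w ∉ V₁)
    (hdisj : ∀ v, v ∈ V₁ → v ∈ V₂ → False)
    (hG₁ : ∀ a b : V, G₁.Adj a b ↔ (G.Adj a b ∧ a ∈ V₁ ∪ {w} ∧ b ∈ V₁ ∪ {w}))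
    (hG₂ : ∀ a b : V, G₂.Adj a b ↔ (G.Adj a b ∧ a ∈ V₂ ∪ {w} ∧ b ∈ V₂ ∪ {w})) :
    ∀ e, e ∈ G₁.edgeSet → e ∈ G₂.edgeSet → False := by
  intro e h1 h2
  induction e using Sym2.ind with
  | _ u v =>
    rw [SimpleGraph.mem_edgeSet] at h1 h2
    obtain ⟨hadj, hu1, hv1⟩ := (hG₁ u v).mp h1
    obtain ⟨-, hu2, hv2⟩ := (hG₂ u v).mp h2
    have hu : u = w := by
      rcases hu1 with h | h
      · rcases hu2 with h' | h'
        · exact absurd h' (fun h'' => hdisj u h h'')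
        · exact Set.mem_singleton_iff.mp h'
      · exact Set.mem_singleton_iff.mp h
    have hv : v = w := by
      rcases hv1 with h | h
      · rcases hv2 with h' | h'
        · exact absurd h' (fun h'' => hdisj v h h'')
        · exact Set.mem_singleton_iff.mp h'
      · exact Set.mem_singleton_iff.mp h
    subst hu hv
    exact G.irrefl hadj

end Struct

section Weights
variable {V : Type*} [Fintype V] [DecidableEq V] {G G₁ G₂ : SimpleGraph V} {w : V} {V₁ V₂ : Set V}

lemma cw_split
    (hsub1 : G₁ ≤ G) (hsub2 : G₂ ≤ G)
    (hcover : ∀ e ∈ G.edgeSet, e ∈ G₁.edgeSet ∨ e ∈ G₂.edgeSet)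
    (hdisjE : ∀ e, e ∈ G₁.edgeSet → e ∈ G₂.edgeSet → False)
    (c : Sym2 V → ℤ) (S : Set V) :
    cutWeight G c S = cutWeight G₁ c S + cutWeight G₂ c S := by
  unfold cutWeight
  have hdE : Disjoint G₁.edgeFinset G₂.edgeFinset := Finset.disjoint_left.mpr fun {e} h1 h2 =>
      (hdisjE e (SimpleGraph.mem_edgeFinset.mp h1) (SimpleGraph.mem_edgeFinset.mp h2)).elim
  rw [← Finset.sum_union hdE]
  apply Finset.sum_congr
  · ext e
    simp only [Finset.mem_union, SimpleGraph.mem_edgeFinset]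
    constructor
    · exact hcover e
    · rintro (h | h)
      · exact SimpleGraph.edgeSet_mono hsub1 h
      · exact SimpleGraph.edgeSet_mono hsub2 h
  · exact fun e _ => rfl

lemma restrict_weight (hwV₁ : w ∉ V₁)
    (hdisj : ∀ v, v ∈ V₁ → v ∈ V₂ → False)
    (hG₁ : ∀ a b : V, G₁.Adj a b ↔ (G.Adj a b ∧ a ∈ V₁ ∪ {w} ∧ b ∈ V₁ ∪ {w}))
    (hG₂ : ∀ a b : V, G₂.Adj a b ↔ (G.Adj a b ∧ a ∈ V₂ ∪ {w} ∧ b ∈ V₂ ∪ {w}))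
    (c : Sym2 V → ℤ) {A : Set V} (hwA : w ∉ A) :
    cutWeight G₁ c (A ∩ V₁) = cutWeight G₁ c A ∧ cutWeight G₂ c (A ∩ V₁) = 0 := by
  constructor
  · apply cutWeight_congr
    intro e he
    revert he
    induction e using Sym2.ind with
    | _ u v =>
      intro he
      obtain ⟨-, hu, hv⟩ := (hG₁ u v).mp ((G₁.mem_edgeSet).mp he)
      have hmem : ∀ x, x ∈ V₁ ∪ {w} → (x ∈ A ∩ V₁ ↔ x ∈ A) := by
        rintro x (hx | hx)
        · exact ⟨fun h => h.1, fun h => ⟨h, hx⟩⟩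
        · have hxw : x = w := hx
          subst hxw
          simp [hwA]
      rw [incut_iff, incut_iff, hmem u hu, hmem v hv]
  · apply cutWeight_eq_zero_of
    intro e he
    rintro ⟨u, v, heq, hu, -⟩
    subst heq
    obtain ⟨-, hu2, -⟩ := (hG₂ u v).mp ((G₂.mem_edgeSet).mp he)
    rcases hu2 with h | h
    · exact hdisj u hu.2 h
    · exact hwV₁ ((Set.mem_singleton_iff.mp h) ▸ hu.2)

lemma shave_weight (hwV₁ : w ∉ V₁)
    (hdisj : ∀ v, v ∈ V₁ → v ∈ V₂ → False)
    (hG₁ : ∀ a b : V, G₁.Adj a b ↔ (G.Adj a b ∧ a ∈ V₁ ∪ {w} ∧ b ∈ V₁ ∪ {w}))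
    (hG₂ : ∀ a b : V, G₂.Adj a b ↔ (G.Adj a b ∧ a ∈ V₂ ∪ {w} ∧ b ∈ V₂ ∪ {w}))
    (c : Sym2 V → ℤ) {S : Set V} (hwS : w ∉ S) :
    cutWeight G₁ c (S \ V₁) = 0 ∧ cutWeight G₂ c (S \ V₁) = cutWeight G₂ c S := by
  constructor
  · apply cutWeight_eq_zero_of
    intro e he
    rintro ⟨u, v, heq, hu, -⟩
    subst heq
    obtain ⟨-, hu1, -⟩ := (hG₁ u v).mp ((G₁.mem_edgeSet).mp he)
    rcases hu1 with h | h
    · exact hu.2 h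
    · exact hwS ((Set.mem_singleton_iff.mp h) ▸ hu.1)
  · apply cutWeight_congr
    intro e he
    revert he
    induction e using Sym2.ind with
    | _ u v =>
      intro he
      obtain ⟨-, hu, hv⟩ := (hG₂ u v).mp ((G₂.mem_edgeSet).mp he)
      have hmem : ∀ x, x ∈ V₂ ∪ {w} → (x ∈ S \ V₁ ↔ x ∈ S) := by
        rintro x (hx | hx)
        · exact ⟨fun h => h.1, fun h => ⟨h, fun h1 => hdisj x h1 hx⟩⟩
        · have hxw : x = w := hx
          subst hxw
          simp [hwS]
      rw [incut_iff, incut_iff, hmem u hu, hmem v hv]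

end Weights

section Main
variable {V : Type*} [Fintype V] [DecidableEq V]

lemma term_side (G : SimpleGraph V) (hconn : G.Connected) (T : Set V)
    (c : Sym2 V → ℤ) (hfw : FacetWeights G T c)
    (w : V) (V₁ V₂ : Set V)
    (hwV₁ : w ∉ V₁)
    (hdisj : ∀ v, v ∈ V₁ → v ∈ V₂ → False)
    (htri : ∀ v, v ∈ V₁ ∨ v = w ∨ v ∈ V₂)
    (hV₁ : V₁.Nonempty) (hV₂ : V₂.Nonempty)
    (hsep : ∀ a ∈ V₁, ∀ b ∈ V₂, ¬ G.Adj a b)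
    (G₁ G₂ : SimpleGraph V)
    (hG₁ : ∀ a b : V, G₁.Adj a b ↔ (G.Adj a b ∧ a ∈ V₁ ∪ {w} ∧ b ∈ V₁ ∪ {w}))
    (hG₂ : ∀ a b : V, G₂.Adj a b ↔ (G.Adj a b ∧ a ∈ V₂ ∪ {w} ∧ b ∈ V₂ ∪ {w})) :
    (T ∩ V₁).Nonempty := by
  by_contra hcon
  rw [Set.not_nonempty_iff_eq_empty] at hcon
  obtain ⟨a, haV₁, haw⟩ := exists_adj_w hconn hdisj htri hsep hV₁ hV₂
  have he₁G₁ : s(a, w) ∈ G₁.edgeSet := (G₁.mem_edgeSet).mpr ((hG₁ a w).mpr ⟨haw, Or.inl haV₁, Or.inr rfl⟩)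
  have he₁G : s(a, w) ∈ G.edgeSet := (G.mem_edgeSet).mpr haw
  have hle1 : G₁ ≤ G := fun {x y} h => ((hG₁ x y).mp h).1
  have hle2 : G₂ ≤ G := fun {x y} h => ((hG₂ x y).mp h).1
  have hcover := edge_cover htri hsep hG₁ hG₂
  have hdisjE := edge_disj hwV₁ hdisj hG₁ hG₂
  obtain ⟨f, hf, hfne⟩ := span_exists_ne_zero hfw.2.2 ⟨s(a, w), he₁G⟩
  obtain ⟨S0, hS0root, rfl⟩ := hf
  have hcut0 : InCut S0 s(a, w) := by
    by_contra h
    apply hfne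
    simp [chi, h]
  obtain ⟨S, hroot, hwS, hcut⟩ : ∃ S, IsRoot G T c S ∧ w ∉ S ∧ InCut S s(a, w) := by
    by_cases hw : w ∈ S0
    · exact ⟨S0ᶜ, (isRoot_compl G T c S0).mpr hS0root, by simp [hw],
        (incut_compl S0 _).mpr hcut0⟩
    · exact ⟨S0, hS0root, hw, hcut0⟩
  have haS : a ∈ S := by
    rcases (incut_iff S a w).mp hcut with ⟨h1, -⟩ | ⟨h1, -⟩
    · exact h1
    · exact absurd h1 hwS
  have hsteiner' : IsSteinerCut T (S \ V₁) := by
    obtain ⟨⟨t, htT, htS⟩, hts⟩ := hroot.1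
    have htV₁ : t ∉ V₁ := fun h => by
      have h2 : t ∈ T ∩ V₁ := ⟨htT, h⟩
      rw [hcon] at h2
      exact h2
    refine ⟨⟨t, htT, htS, htV₁⟩, ?_⟩
    obtain ⟨x, hx1, hx2⟩ := hts
    exact ⟨x, hx1, fun h => hx2 h.1⟩
  obtain ⟨hcw1', hcw2'⟩ := shave_weight hwV₁ hdisj hG₁ hG₂ c hwS
  have hpos1 : 0 < cutWeight G₁ c S :=
    cutWeight_pos G₁ (fun e he => hfw.1 e (SimpleGraph.edgeSet_mono hle1 he)) he₁G₁ hcut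
  have hmin := hroot.2 (S \ V₁) hsteiner'
  rw [cw_split hle1 hle2 hcover hdisjE c S, cw_split hle1 hle2 hcover hdisjE c (S \ V₁),
    hcw1', hcw2'] at hmin
  linarith

lemma side (G : SimpleGraph V) (hconn : G.Connected) (T : Set V)
    (c : Sym2 V → ℤ) (hfw : FacetWeights G T c)
    (w : V) (V₁ V₂ : Set V)
    (hwV₁ : w ∉ V₁)
    (hdisj : ∀ v, v ∈ V₁ → v ∈ V₂ → False)
    (htri : ∀ v, v ∈ V₁ ∨ v = w ∨ v ∈ V₂)
    (hV₂ : V₂.Nonempty)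
    (hsep : ∀ a ∈ V₁, ∀ b ∈ V₂, ¬ G.Adj a b)
    (G₁ G₂ : SimpleGraph V)
    (hG₁ : ∀ a b : V, G₁.Adj a b ↔ (G.Adj a b ∧ a ∈ V₁ ∪ {w} ∧ b ∈ V₁ ∪ {w}))
    (hG₂ : ∀ a b : V, G₂.Adj a b ↔ (G.Adj a b ∧ a ∈ V₂ ∪ {w} ∧ b ∈ V₂ ∪ {w}))
    (T₁ : Set V) (hT₁ : T₁ = (T ∩ V₁) ∪ {w})
    (hTV₁ : (T ∩ V₁).Nonempty) (hTV₂ : (T ∩ V₂).Nonempty) :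
    2 ≤ T₁.ncard ∧
    ∃ (c₁ : Sym2 V → ℤ) (d₁ : ℤ), 0 < d₁ ∧ (∀ e ∈ G₁.edgeSet, c e = d₁ * c₁ e) ∧
      (G₁.induce (V₁ ∪ {w})).Connected ∧ FacetWeights G₁ T₁ c₁ := by
  have hV₁ : V₁.Nonempty := ⟨hTV₁.choose, hTV₁.choose_spec.2⟩
  -- cardinality of T₁
  obtain ⟨t₁, ht₁T, ht₁V₁⟩ := hTV₁
  have ht₁w : t₁ ≠ w := fun h => hwV₁ (h ▸ ht₁V₁)
  have hsub : ({t₁, w} : Set V) ⊆ T₁ := by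
    rw [hT₁]
    rintro x (rfl | rfl)
    · exact Or.inl ⟨ht₁T, ht₁V₁⟩
    · exact Or.inr rfl
  have hcard : 2 ≤ T₁.ncard := by
    have h2 : ({t₁, w} : Set V).ncard = 2 := Set.ncard_pair ht₁w
    rw [← h2]
    exact Set.ncard_le_ncard hsub (Set.toFinite _)
  -- structural facts
  have hle1 : G₁ ≤ G := fun {x y} h => ((hG₁ x y).mp h).1
  have hle2 : G₂ ≤ G := fun {x y} h => ((hG₂ x y).mp h).1
  have hcover := edge_cover htri hsep hG₁ hG₂
  have hdisjE := edge_disj hwV₁ hdisj hG₁ hG₂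
  have hsplit := cw_split hle1 hle2 hcover hdisjE c
  obtain ⟨a, haV₁, haw⟩ := exists_adj_w hconn hdisj htri hsep hV₁ hV₂
  have he₁G₁ : s(a, w) ∈ G₁.edgeSet :=
    (G₁.mem_edgeSet).mpr ((hG₁ a w).mpr ⟨haw, Or.inl haV₁, Or.inr rfl⟩)
  have hcpos1 : ∀ e ∈ G₁.edgeSet, 0 < c e :=
    fun e he => hfw.1 e (SimpleGraph.edgeSet_mono hle1 he)
  -- the gcd and scaled weights
  set d₁ : ℤ := ((G₁.edgeFinset.gcd c).natAbs : ℤ) with hd₁def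
  have hgcd_dvd : ∀ e ∈ G₁.edgeSet, d₁ ∣ c e := fun e he =>
    (Int.natAbs_dvd).mpr (Finset.gcd_dvd (SimpleGraph.mem_edgeFinset.mpr he))
  set c₁ : Sym2 V → ℤ := fun e => c e / d₁ with hc₁def
  have hceq : ∀ e ∈ G₁.edgeSet, c e = d₁ * c₁ e := fun e he =>
    (Int.mul_ediv_cancel' (hgcd_dvd e he)).symm
  have hd₁pos : 0 < d₁ := by
    have hne : G₁.edgeFinset.gcd c ≠ 0 := by
      intro h
      have h0 := Finset.gcd_eq_zero_iff.mp h s(a, w) (SimpleGraph.mem_edgeFinset.mpr he₁G₁)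
      have h1 := hcpos1 s(a, w) he₁G₁
      omega
    have h5 : 0 < (G₁.edgeFinset.gcd c).natAbs := Int.natAbs_pos.mpr hne
    rw [hd₁def]
    exact_mod_cast h5
  have hc₁pos : ∀ e ∈ G₁.edgeSet, 0 < c₁ e := by
    intro e he
    have h0 : 0 < d₁ * c₁ e := by rw [← hceq e he]; exact hcpos1 e he
    rcases mul_pos_iff.mp h0 with ⟨-, h⟩ | ⟨h, -⟩
    · exact h
    · exact absurd hd₁pos (not_lt.mpr h.le)
  have hminform : ∀ d : ℤ, (∀ e ∈ G₁.edgeSet, d ∣ c₁ e) → IsUnit d := by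
    intro d hd
    have hdvd : ∀ e ∈ G₁.edgeFinset, d₁ * d ∣ c e := by
      intro e he
      obtain ⟨k, hk⟩ := hd e (SimpleGraph.mem_edgeFinset.mp he)
      exact ⟨k, by rw [hceq e (SimpleGraph.mem_edgeFinset.mp he), hk]; ring⟩
    have h1 : d₁ * d ∣ G₁.edgeFinset.gcd c := Finset.dvd_gcd hdvd
    have h2 : d₁ * d ∣ d₁ := (Int.dvd_natAbs).mpr h1
    obtain ⟨k, hk⟩ := h2
    have h3 : d₁ * (d * k) = d₁ * 1 := by rw [mul_one, ← mul_assoc, ← hk]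
    exact IsUnit.of_mul_eq_one (a := d) k (mul_left_cancel₀ hd₁pos.ne' h3)
  have hrooteq : ∀ S, IsRoot G₁ T₁ c₁ S ↔ IsRoot G₁ T₁ c S := by
    intro S
    have hsc : ∀ S', cutWeight G₁ c S' = d₁ * cutWeight G₁ c₁ S' :=
      cutWeight_scale G₁ c c₁ d₁ hceq
    unfold IsRoot
    constructor
    · rintro ⟨h1, h2⟩
      refine ⟨h1, fun S' hS' => ?_⟩
      rw [hsc, hsc]
      exact mul_le_mul_of_nonneg_left (h2 S' hS') hd₁pos.le
    · rintro ⟨h1, h2⟩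
      refine ⟨h1, fun S' hS' => ?_⟩
      have h3 := h2 S' hS'
      rw [hsc, hsc] at h3
      exact le_of_mul_le_mul_left h3 hd₁pos
  -- the restriction linear map
  have hle_e : ∀ e, e ∈ G₁.edgeSet → e ∈ G.edgeSet := fun e he => SimpleGraph.edgeSet_mono hle1 he
  set j : ↥G₁.edgeSet → ↥G.edgeSet := fun e => ⟨e.1, hle_e e.1 e.2⟩ with hjdef
  have hjinj : Function.Injective j := by
    intro e e' h
    apply Subtype.ext
    have h2 : (j e).1 = (j e').1 := by rw [h]
    simpa [hjdef] using h2
  set R : (↥G.edgeSet → ℝ) →ₗ[ℝ] (↥G₁.edgeSet → ℝ) := LinearMap.funLeft ℝ ℝ j with hRdef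
  have hRsurj : Function.Surjective R := LinearMap.funLeft_surjective_of_injective ℝ ℝ j hjinj
  -- the B construction: restricting a T₁-cut to V₁ gives a T-cut of the same weight
  have hB : ∀ A : Set V, w ∉ A → IsSteinerCut T₁ A →
      IsSteinerCut T (A ∩ V₁) ∧ cutWeight G c (A ∩ V₁) = cutWeight G₁ c A := by
    intro A hwA hA
    obtain ⟨⟨s, hsT₁, hsA⟩, -⟩ := hA
    have hs' : s ∈ T ∩ V₁ := by
      rw [hT₁] at hsT₁
      rcases hsT₁ with h | h
      · exact h
      · exact absurd ((Set.mem_singleton_iff.mp h) ▸ hsA) hwA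
    obtain ⟨t₂, ht₂T, ht₂V₂⟩ := hTV₂
    obtain ⟨hrw1, hrw2⟩ := restrict_weight hwV₁ hdisj hG₁ hG₂ c hwA
    constructor
    · refine ⟨⟨s, hs'.1, hsA, hs'.2⟩, ⟨t₂, ht₂T, ?_⟩⟩
      rintro ⟨-, h⟩
      exact hdisj t₂ h ht₂V₂
    · rw [hsplit, hrw1, hrw2, add_zero]
  -- key claim: the restriction of every root's incidence vector lies in the span
  have key : ∀ S, IsRoot G T c S → w ∉ S →
      R (chi G S) ∈ Submodule.span ℝ (chi G₁ '' {S | IsRoot G₁ T₁ c S}) := by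
    intro S hroot hwS
    by_cases hTS : (T ∩ S ∩ V₁).Nonempty
    · -- S is a root of G₁
      obtain ⟨t, ⟨htT, htS⟩, htV₁⟩ := hTS
      have hsc1 : IsSteinerCut T₁ S :=
        ⟨⟨t, by rw [hT₁]; exact Or.inl ⟨htT, htV₁⟩, htS⟩,
         ⟨w, by rw [hT₁]; exact Or.inr rfl, hwS⟩⟩
      obtain ⟨hBS1, hBS2⟩ := hB S hwS hsc1
      have hmin := hroot.2 (S ∩ V₁) hBS1
      rw [hBS2, hsplit S] at hmin
      have hcw2 : cutWeight G₂ c S = 0 := by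
        have hnn : 0 ≤ cutWeight G₂ c S :=
          cutWeight_nonneg G₂ (fun e he => hfw.1 e (SimpleGraph.edgeSet_mono hle2 he)) S
        linarith
      have hrootS₁ : IsRoot G₁ T₁ c S := by
        refine ⟨hsc1, fun A hA => ?_⟩
        obtain ⟨A', hwA', hA', hcwA⟩ :
            ∃ A', w ∉ A' ∧ IsSteinerCut T₁ A' ∧ cutWeight G₁ c A' = cutWeight G₁ c A := by
          by_cases hw : w ∈ A
          · exact ⟨Aᶜ, by simp [hw], (steiner_compl T₁ A).mpr hA, cutWeight_compl G₁ c A⟩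
          · exact ⟨A, hw, hA, rfl⟩
        obtain ⟨hBA1, hBA2⟩ := hB A' hwA' hA'
        have h4 := hroot.2 (A' ∩ V₁) hBA1
        rw [hBA2] at h4
        calc cutWeight G₁ c S = cutWeight G c S := by rw [hsplit S, hcw2, add_zero]
          _ ≤ cutWeight G₁ c A' := h4
          _ = cutWeight G₁ c A := hcwA
      have hRchi : R (chi G S) = chi G₁ S := by
        funext e
        simp only [hRdef, LinearMap.funLeft_apply, Function.comp_apply]
        rfl
      rw [hRchi]
      exact Submodule.subset_span ⟨S, hrootS₁, rfl⟩
    · -- S cuts no edge of G₁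
      rw [Set.not_nonempty_iff_eq_empty] at hTS
      have hsteiner' : IsSteinerCut T (S \ V₁) := by
        obtain ⟨⟨t, htT, htS⟩, hts⟩ := hroot.1
        have htV₁ : t ∉ V₁ := fun h => by
          have h2 : t ∈ T ∩ S ∩ V₁ := ⟨⟨htT, htS⟩, h⟩
          rw [hTS] at h2
          exact h2
        refine ⟨⟨t, htT, htS, htV₁⟩, ?_⟩
        obtain ⟨x, hx1, hx2⟩ := hts
        exact ⟨x, hx1, fun h => hx2 h.1⟩
      obtain ⟨hcw1', hcw2'⟩ := shave_weight hwV₁ hdisj hG₁ hG₂ c hwS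
      have hmin := hroot.2 (S \ V₁) hsteiner'
      rw [hsplit S, hsplit (S \ V₁), hcw1', hcw2'] at hmin
      have h0 : cutWeight G₁ c S ≤ 0 := by linarith
      have hnc : ∀ e ∈ G₁.edgeSet, ¬ InCut S e := incut_not_of_le_zero G₁ hcpos1 h0
      have hz : R (chi G S) = 0 := by
        funext e
        simp only [hRdef, LinearMap.funLeft_apply, Function.comp_apply, Pi.zero_apply]
        show (if InCut S (j e).1 then (1:ℝ) else 0) = 0
        rw [if_neg (hnc e.1 e.2)]
      rw [hz]
      exact Submodule.zero_mem _
  -- conclude the span condition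
  have hspan : Submodule.span ℝ (chi G₁ '' {S | IsRoot G₁ T₁ c S}) = ⊤ := by
    have h1 : Submodule.map R (Submodule.span ℝ (chi G '' {S | IsRoot G T c S})) ≤
        Submodule.span ℝ (chi G₁ '' {S | IsRoot G₁ T₁ c S}) := by
      rw [Submodule.map_span, Submodule.span_le]
      rintro x ⟨y, ⟨S, hS, rfl⟩, rfl⟩
      by_cases hw : w ∈ S
      · have hc : chi G S = chi G Sᶜ := (chi_compl G S).symm
        rw [hc]
        exact key Sᶜ ((isRoot_compl G T c S).mpr hS) (by simp [hw])
      · exact key S hS hw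
    rw [hfw.2.2, Submodule.map_top, LinearMap.range_eq_top.mpr hRsurj] at h1
    exact top_unique h1
  refine ⟨hcard, c₁, d₁, hd₁pos, hceq,
    induce_connected_side hconn hwV₁ htri hsep hG₁, hc₁pos, hminform, ?_⟩
  have hseteq : {S | IsRoot G₁ T₁ c₁ S} = {S | IsRoot G₁ T₁ c S} := Set.ext fun S => hrooteq S
  rw [hseteq]
  exact hspan


end Main

/-- Splitting a facet inducing Steiner graph `(G, T)` with facet weights `c` at a cut
vertex `w`: with `V₁` the vertex set of a component of `G \ w`, `V₂` the remaining
vertices of `G \ w`, `G₁`, `G₂` the subgraphs induced by `V₁ ∪ {w}`, `V₂ ∪ {w}`, and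
`T₁ = (T ∩ V₁) ∪ {w}`, `T₂ = (T ∩ V₂) ∪ {w}`, we have `|T₁| ≥ 2`, `|T₂| ≥ 2`, and both
`(G₁, T₁)` and `(G₂, T₂)` are facet inducing Steiner graphs whose facet weights are the
minimum integer forms of the restrictions of `c`. -/
theorem cut_vertex_split {V : Type*} [Fintype V] [DecidableEq V]
    (G : SimpleGraph V) (hconn : G.Connected) (T : Set V) (hT : 2 ≤ T.ncard)
    (c : Sym2 V → ℤ) (hfw : FacetWeights G T c)
    (w : V) (V₁ V₂ : Set V)
    (hV₁ : V₁.Nonempty) (hwV₁ : w ∉ V₁)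
    (hV₂def : V₂ = {w}ᶜ \ V₁) (hV₂ : V₂.Nonempty)
    (hcomp : (G.induce V₁).Connected)
    (hsep : ∀ a ∈ V₁, ∀ b ∈ V₂, ¬ G.Adj a b)
    (G₁ G₂ : SimpleGraph V)
    (hG₁ : ∀ a b : V, G₁.Adj a b ↔ (G.Adj a b ∧ a ∈ V₁ ∪ {w} ∧ b ∈ V₁ ∪ {w}))
    (hG₂ : ∀ a b : V, G₂.Adj a b ↔ (G.Adj a b ∧ a ∈ V₂ ∪ {w} ∧ b ∈ V₂ ∪ {w}))
    (T₁ T₂ : Set V) (hT₁ : T₁ = (T ∩ V₁) ∪ {w}) (hT₂ : T₂ = (T ∩ V₂) ∪ {w}) :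
    2 ≤ T₁.ncard ∧ 2 ≤ T₂.ncard ∧
    (∃ (c₁ : Sym2 V → ℤ) (d₁ : ℤ), 0 < d₁ ∧ (∀ e ∈ G₁.edgeSet, c e = d₁ * c₁ e) ∧
      (G₁.induce (V₁ ∪ {w})).Connected ∧ FacetWeights G₁ T₁ c₁) ∧
    (∃ (c₂ : Sym2 V → ℤ) (d₂ : ℤ), 0 < d₂ ∧ (∀ e ∈ G₂.edgeSet, c e = d₂ * c₂ e) ∧
      (G₂.induce (V₂ ∪ {w})).Connected ∧ FacetWeights G₂ T₂ c₂) := by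
  have htri : ∀ v, v ∈ V₁ ∨ v = w ∨ v ∈ V₂ := by
    intro v
    by_cases h1 : v ∈ V₁
    · exact Or.inl h1
    by_cases h2 : v = w
    · exact Or.inr (Or.inl h2)
    · refine Or.inr (Or.inr ?_)
      rw [hV₂def]
      exact ⟨h2, h1⟩
  have hwV₂ : w ∉ V₂ := by
    rw [hV₂def]
    rintro ⟨h, -⟩
    exact h rfl
  have hdisj : ∀ v, v ∈ V₁ → v ∈ V₂ → False := by
    intro v h1 h2
    rw [hV₂def] at h2
    exact h2.2 h1
  have htri' : ∀ v, v ∈ V₂ ∨ v = w ∨ v ∈ V₁ := fun v => by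
    rcases htri v with h | h | h
    · exact Or.inr (Or.inr h)
    · exact Or.inr (Or.inl h)
    · exact Or.inl h
  have hsep' : ∀ a ∈ V₂, ∀ b ∈ V₁, ¬ G.Adj a b := fun a ha b hb hadj => hsep b hb a ha hadj.symm
  have hdisj' : ∀ v, v ∈ V₂ → v ∈ V₁ → False := fun v h2 h1 => hdisj v h1 h2
  have hTV₁ := term_side G hconn T c hfw w V₁ V₂ hwV₁ hdisj htri hV₁ hV₂ hsep G₁ G₂ hG₁ hG₂
  have hTV₂ := term_side G hconn T c hfw w V₂ V₁ hwV₂ hdisj' htri' hV₂ hV₁ hsep' G₂ G₁ hG₂ hG₁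
  obtain ⟨h1, hside1⟩ :=
    side G hconn T c hfw w V₁ V₂ hwV₁ hdisj htri hV₂ hsep G₁ G₂ hG₁ hG₂ T₁ hT₁ hTV₁ hTV₂
  obtain ⟨h2, hside2⟩ :=
    side G hconn T c hfw w V₂ V₁ hwV₂ hdisj' htri' hV₁ hsep' G₂ G₁ hG₂ hG₁ T₂ hT₂ hTV₂ hTV₁
  exact ⟨h1, h2, hside1, hside2⟩
end

section
/- If the Steiner graph (G, T) is obtained by subdividing an edge uv of a facet inducing Steiner graph (G', T') (replacing uv by edges uw, vw with a new non-terminal vertex w), then (G, T) is a facet inducing Steiner graph, with facet weights c given by c(uw) = c(vw) = c'(uv) and c(e) = c'(e) on all other edges, where c' are facet weights for (G', T'). -/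
open Classical

lemma incut_pair_iff {V : Type*} {S : Set V} {a b : V} :
    InCut S s(a, b) ↔ (a ∈ S ∧ b ∉ S) ∨ (b ∈ S ∧ a ∉ S) := by
  constructor
  · rintro ⟨x, y, hxy, hx, hy⟩
    rw [Sym2.eq_iff] at hxy
    rcases hxy with ⟨rfl, rfl⟩ | ⟨rfl, rfl⟩
    · exact Or.inl ⟨hx, hy⟩
    · exact Or.inr ⟨hx, hy⟩
  · rintro (⟨ha, hb⟩ | ⟨hb, ha⟩)
    · exact ⟨a, b, rfl, ha, hb⟩
    · exact ⟨b, a, Sym2.eq_swap.symm, hb, ha⟩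

def optLift {V : Type*} (v : V) (S' : Set V) : Set (Option V) :=
  {x | Option.elim x (v ∈ S') (fun a => a ∈ S')}

def optLift' {V : Type*} (v : V) (S' : Set V) : Set (Option V) :=
  {x | Option.elim x (v ∉ S') (fun a => a ∈ S')}

@[simp] lemma mem_optLift_some {V : Type*} {v a : V} {S' : Set V} :
    some a ∈ optLift v S' ↔ a ∈ S' := Iff.rfl
@[simp] lemma mem_optLift_none {V : Type*} {v : V} {S' : Set V} :
    (none : Option V) ∈ optLift v S' ↔ v ∈ S' := Iff.rfl
@[simp] lemma preimage_optLift {V : Type*} {v : V} {S' : Set V} :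
    some ⁻¹' (optLift v S') = S' := rfl
@[simp] lemma mem_optLift'_some {V : Type*} {v a : V} {S' : Set V} :
    some a ∈ optLift' v S' ↔ a ∈ S' := Iff.rfl
@[simp] lemma mem_optLift'_none {V : Type*} {v : V} {S' : Set V} :
    (none : Option V) ∈ optLift' v S' ↔ v ∉ S' := Iff.rfl
@[simp] lemma preimage_optLift' {V : Type*} {v : V} {S' : Set V} :
    some ⁻¹' (optLift' v S') = S' := rfl

lemma span_top_aux {M N : Type*} [AddCommGroup M] [Module ℝ M] [AddCommGroup N] [Module ℝ N]
    (ψ : M →ₗ[ℝ] N) (p : Submodule ℝ M) (hker : LinearMap.ker ψ ≤ p)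
    (hmap : Submodule.map ψ p = ⊤) : p = ⊤ := by
  rw [eq_top_iff]
  rintro x -
  have hx : ψ x ∈ Submodule.map ψ p := by rw [hmap]; trivial
  obtain ⟨y, hy, hxy⟩ := hx
  have hk : x - y ∈ LinearMap.ker ψ := by
    rw [LinearMap.mem_ker, map_sub, hxy, sub_self]
  have := p.add_mem (hker hk) hy
  simpa using this

/-- Subdividing an edge `uv` of a facet inducing Steiner graph `(G', T)` by a new
non-terminal vertex `w = none : Option V` yields a facet inducing Steiner graph, with
facet weights `c` given by `c(uw) = c(vw) = c'(uv)` and `c(e) = c'(e)` on all other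
edges. -/
theorem subdivision_facet {V : Type*} [Fintype V] [DecidableEq V]
    (G' : SimpleGraph V) (hconn' : G'.Connected) (T : Set V) (hT : 2 ≤ T.ncard)
    (c' : Sym2 V → ℤ) (hfw' : FacetWeights G' T c')
    (u v : V) (huv : G'.Adj u v)
    (G : SimpleGraph (Option V))
    (hGsome : ∀ a b : V, G.Adj (some a) (some b) ↔ (G'.Adj a b ∧ s(a, b) ≠ s(u, v)))
    (hGnone : ∀ a : V, G.Adj (some a) none ↔ (a = u ∨ a = v))
    (c : Sym2 (Option V) → ℤ)
    (hcsome : ∀ a b : V, c s(some a, some b) = c' s(a, b))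
    (hcnone : ∀ a : V, c s(some a, none) = c' s(u, v)) :
    G.Connected ∧ 2 ≤ (some '' T : Set (Option V)).ncard ∧
      FacetWeights G (some '' T) c := by
  have hne_uv : u ≠ v := huv.ne
  have hcuv : 0 < c' s(u, v) := hfw'.1 _ (G'.mem_edgeSet.mpr huv)
  have hadj_uw : G.Adj (some u) none := (hGnone u).mpr (Or.inl rfl)
  have hadj_vw : G.Adj (some v) none := (hGnone v).mpr (Or.inr rfl)
  have heuw : s(some u, (none : Option V)) ∈ G.edgeSet := hadj_uw
  have hevw : s(some v, (none : Option V)) ∈ G.edgeSet := hadj_vw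
  have heuw_ne_evw : s(some u, (none : Option V)) ≠ s(some v, none) := by
    simp [Sym2.eq_iff, hne_uv]
  -- edge classification
  have hedge_cases : ∀ e ∈ G.edgeSet,
      (∃ a b, G'.Adj a b ∧ s(a, b) ≠ s(u, v) ∧ e = s(some a, some b)) ∨
        e = s(some u, none) ∨ e = s(some v, none) := by
    intro e
    induction e using Sym2.ind with
    | _ x y =>
      intro he
      rw [SimpleGraph.mem_edgeSet] at he
      match x, y with
      | some a, some b =>
        exact Or.inl ⟨a, b, ((hGsome a b).mp he).1, ((hGsome a b).mp he).2, rfl⟩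
      | some a, none =>
        rcases (hGnone a).mp he with rfl | rfl
        · exact Or.inr (Or.inl rfl)
        · exact Or.inr (Or.inr rfl)
      | none, some a =>
        rcases (hGnone a).mp he.symm with rfl | rfl
        · exact Or.inr (Or.inl Sym2.eq_swap)
        · exact Or.inr (Or.inr Sym2.eq_swap)
      | none, none => exact absurd he G.irrefl
  -- connectivity
  have hreach : ∀ a b : V, G.Reachable (some a) (some b) := by
    have hstep : ∀ a b : V, G'.Adj a b → G.Reachable (some a) (some b) := by
      intro a b hab
      by_cases h : s(a, b) = s(u, v)
      · rw [Sym2.eq_iff] at h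
        rcases h with ⟨rfl, rfl⟩ | ⟨rfl, rfl⟩
        · exact hadj_uw.reachable.trans hadj_vw.symm.reachable
        · exact hadj_vw.reachable.trans hadj_uw.symm.reachable
      · exact ((hGsome a b).mpr ⟨hab, h⟩).reachable
    intro a b
    obtain ⟨p⟩ := hconn'.preconnected a b
    induction p with
    | nil => exact SimpleGraph.Reachable.refl _
    | cons h q ih => exact (hstep _ _ h).trans ih
  have hconn : G.Connected := by
    rw [SimpleGraph.connected_iff]
    refine ⟨fun x y => ?_, ⟨none⟩⟩
    have hx : ∀ z : Option V, G.Reachable z (some u) := by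
      intro z
      cases z with
      | none => exact hadj_uw.symm.reachable
      | some a => exact hreach a u
    exact (hx x).trans (hx y).symm
  refine ⟨hconn, ?_, ?_, ?_, ?_⟩
  · rwa [Set.ncard_image_of_injective T (Option.some_injective V)]
  · -- positivity
    intro e he
    rcases hedge_cases e he with ⟨a, b, hab, hne, rfl⟩ | rfl | rfl
    · rw [hcsome]
      exact hfw'.1 _ (G'.mem_edgeSet.mpr hab)
    · rw [hcnone]; exact hcuv
    · rw [hcnone]; exact hcuv
  · -- minimum integer form
    intro d hd
    refine hfw'.2.1 d ?_
    intro e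
    induction e using Sym2.ind with
    | _ a b =>
      intro he
      by_cases h : s(a, b) = s(u, v)
      · rw [h, ← hcnone u]
        exact hd _ heuw
      · rw [← hcsome]
        exact hd _ (G.mem_edgeSet.mpr ((hGsome a b).mpr ⟨G'.mem_edgeSet.mp he, h⟩))
  · -- span condition
    have hmem_map : ∀ e, e ∈ G'.edgeSet → e ≠ s(u, v) → Sym2.map some e ∈ G.edgeSet := by
      intro e
      induction e using Sym2.ind with
      | _ a b =>
        intro he hne
        rw [Sym2.map_pair_eq]
        exact G.mem_edgeSet.mpr ((hGsome a b).mpr ⟨G'.mem_edgeSet.mp he, hne⟩)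
    have hinj : Function.Injective (Sym2.map (some : V → Option V)) :=
      Sym2.map.injective (Option.some_injective V)
    have huv_fin : s(u, v) ∈ G'.edgeFinset :=
      SimpleGraph.mem_edgeFinset.mpr (G'.mem_edgeSet.mpr huv)
    have hfin : G.edgeFinset =
        ((G'.edgeFinset.erase s(u, v)).image (Sym2.map some))
          ∪ {s(some u, none), s(some v, none)} := by
      ext e
      simp only [Finset.mem_union, Finset.mem_image, Finset.mem_erase, Finset.mem_insert,
        Finset.mem_singleton, SimpleGraph.mem_edgeFinset]
      constructor
      · intro he
        rcases hedge_cases e he with ⟨a, b, hab, hne, rfl⟩ | rfl | rfl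
        · exact Or.inl ⟨s(a, b), ⟨hne, G'.mem_edgeSet.mpr hab⟩, Sym2.map_pair_eq _ _ _⟩
        · exact Or.inr (Or.inl rfl)
        · exact Or.inr (Or.inr rfl)
      · rintro (⟨e₀, ⟨hne, he₀⟩, rfl⟩ | rfl | rfl)
        · exact hmem_map e₀ he₀ hne
        · exact heuw
        · exact hevw
    have hnotmem : ∀ e₀ : Sym2 V, Sym2.map (some : V → Option V) e₀ ∉
        ({s(some u, none), s(some v, none)} : Finset (Sym2 (Option V))) := by
      intro e₀
      induction e₀ using Sym2.ind with
      | _ a b =>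
        rw [Sym2.map_pair_eq]
        simp [Sym2.eq_iff]
    have hdisj : Disjoint ((G'.edgeFinset.erase s(u, v)).image (Sym2.map some))
        ({s(some u, none), s(some v, none)} : Finset (Sym2 (Option V))) := by
      rw [Finset.disjoint_left]
      rintro e he hmem
      obtain ⟨e₀, _, rfl⟩ := Finset.mem_image.mp he
      exact hnotmem e₀ hmem
    have hmaster : ∀ S : Set (Option V),
        cutWeight G c S + (if InCut (some ⁻¹' S) s(u, v) then c' s(u, v) else 0)
          = cutWeight G' c' (some ⁻¹' S)
            + (if InCut S s(some u, none) then c' s(u, v) else 0)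
            + (if InCut S s(some v, none) then c' s(u, v) else 0) := by
      intro S
      have hpt : ∀ e : Sym2 V,
          (if InCut S (Sym2.map some e) then c (Sym2.map some e) else 0)
            = (if InCut (some ⁻¹' S) e then c' e else 0) := by
        intro e
        induction e using Sym2.ind with
        | _ a b =>
          rw [Sym2.map_pair_eq, hcsome]
          simp only [incut_pair_iff, Set.mem_preimage]
      have hsplit : cutWeight G c S
          = (∑ e ∈ G'.edgeFinset.erase s(u, v), if InCut (some ⁻¹' S) e then c' e else 0)
            + ((if InCut S s(some u, none) then c s(some u, none) else 0)
              + (if InCut S s(some v, none) then c s(some v, none) else 0)) := by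
        unfold cutWeight
        rw [hfin, Finset.sum_union hdisj,
          Finset.sum_image (fun x _ y _ h => hinj h), Finset.sum_pair heuw_ne_evw]
        congr 1
        exact Finset.sum_congr rfl fun e _ => hpt e
      have herase : (∑ e ∈ G'.edgeFinset.erase s(u, v),
            if InCut (some ⁻¹' S) e then c' e else 0)
          + (if InCut (some ⁻¹' S) s(u, v) then c' s(u, v) else 0)
          = cutWeight G' c' (some ⁻¹' S) :=
        Finset.sum_erase_add _ _ huv_fin
      rw [hsplit, hcnone u, hcnone v]
      linarith [herase]
    have hge : ∀ S : Set (Option V), cutWeight G' c' (some ⁻¹' S) ≤ cutWeight G c S := by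
      intro S
      have h := hmaster S
      by_cases hu : some u ∈ S <;> by_cases hv : some v ∈ S <;>
        by_cases hn : (none : Option V) ∈ S <;>
        simp only [incut_pair_iff, Set.mem_preimage, hu, hv, hn, not_true, not_false_iff,
          true_and, false_and, and_true, and_false, or_false, false_or, true_or, or_true,
          if_true, if_false, and_self, or_self, not_false_eq_true, not_true_eq_false] at h <;>
        linarith
    have heqL : ∀ S' : Set V, cutWeight G c (optLift v S') = cutWeight G' c' S' := by
      intro S'
      have h := hmaster (optLift v S')
      rw [preimage_optLift] at h
      by_cases hu : u ∈ S' <;> by_cases hv : v ∈ S' <;>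
        simp only [incut_pair_iff, mem_optLift_some, mem_optLift_none, hu, hv, not_true,
          true_and, false_and, and_true, and_false, or_false, false_or, true_or, or_true,
          if_true, if_false, and_self, or_self, not_false_eq_true, not_true_eq_false] at h <;>
        linarith
    have heqL' : ∀ S' : Set V, InCut S' s(u, v) →
        cutWeight G c (optLift' v S') = cutWeight G' c' S' := by
      intro S' hcross
      have h := hmaster (optLift' v S')
      rw [preimage_optLift'] at h
      rcases incut_pair_iff.mp hcross with ⟨hu, hv⟩ | ⟨hv, hu⟩ <;>
        simp only [incut_pair_iff, mem_optLift'_some, mem_optLift'_none, hu, hv, not_true,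
          true_and, false_and, and_true, and_false, or_false, false_or, true_or, or_true,
          if_true, if_false, and_self, or_self, not_false_eq_true, not_true_eq_false,
          not_not] at h <;>
        linarith
    have hSt1 : ∀ S : Set (Option V), IsSteinerCut (some '' T) S →
        IsSteinerCut T (some ⁻¹' S) := by
      rintro S ⟨⟨x, hx1, hx2⟩, ⟨y, hy1, hy2⟩⟩
      obtain ⟨t, htT, rfl⟩ := hx1
      obtain ⟨s, hsT, rfl⟩ := hy1
      exact ⟨⟨t, htT, hx2⟩, ⟨s, hsT, hy2⟩⟩
    have hSt2 : ∀ (S' : Set V) (S : Set (Option V)), some ⁻¹' S = S' →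
        IsSteinerCut T S' → IsSteinerCut (some '' T) S := by
      rintro S' S hpre ⟨⟨t, htT, htS⟩, ⟨s, hsT, hsS⟩⟩
      subst hpre
      exact ⟨⟨some t, ⟨t, htT, rfl⟩, htS⟩, ⟨some s, ⟨s, hsT, rfl⟩, hsS⟩⟩
    have hrootL : ∀ S' : Set V, IsRoot G' T c' S' → IsRoot G (some '' T) c (optLift v S') := by
      rintro S' ⟨hst, hmin⟩
      refine ⟨hSt2 S' _ preimage_optLift hst, fun S₂ hS₂ => ?_⟩
      rw [heqL S']
      exact le_trans (hmin _ (hSt1 _ hS₂)) (hge S₂)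
    have hrootL' : ∀ S' : Set V, IsRoot G' T c' S' → InCut S' s(u, v) →
        IsRoot G (some '' T) c (optLift' v S') := by
      rintro S' ⟨hst, hmin⟩ hcross
      refine ⟨hSt2 S' _ preimage_optLift' hst, fun S₂ hS₂ => ?_⟩
      rw [heqL' S' hcross]
      exact le_trans (hmin _ (hSt1 _ hS₂)) (hge S₂)
    obtain ⟨ψ, hψ⟩ : ∃ ψ : (↥G.edgeSet → ℝ) →ₗ[ℝ] (↥G'.edgeSet → ℝ),
        ∀ (y : ↥G.edgeSet → ℝ) (e' : ↥G'.edgeSet), ψ y e' =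
          if h : e'.val = s(u, v) then
            y ⟨s(some u, none), heuw⟩ + y ⟨s(some v, none), hevw⟩
          else y ⟨Sym2.map some e'.val, hmem_map e'.val e'.2 h⟩ := by
      refine ⟨⟨⟨fun y e' =>
        if h : e'.val = s(u, v) then
          y ⟨s(some u, none), heuw⟩ + y ⟨s(some v, none), hevw⟩
        else y ⟨Sym2.map some e'.val, hmem_map e'.val e'.2 h⟩, ?_⟩, ?_⟩, fun y e' => rfl⟩
      · intro y z
        funext e'
        by_cases h : e'.val = s(u, v) <;> simp [h] <;> ring
      · intro r y
        funext e'
        by_cases h : e'.val = s(u, v) <;> simp [h] <;> ring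
    have hψchi : ∀ S' : Set V, ψ (chi G (optLift v S')) = chi G' S' := by
      intro S'
      funext e'
      obtain ⟨e, he⟩ := e'
      rw [hψ]
      by_cases h : e = s(u, v)
      · subst h
        rw [dif_pos rfl]
        show (if InCut (optLift v S') s(some u, none) then (1 : ℝ) else 0)
            + (if InCut (optLift v S') s(some v, none) then (1 : ℝ) else 0)
          = if InCut S' s(u, v) then (1 : ℝ) else 0
        by_cases hu : u ∈ S' <;> by_cases hv : v ∈ S' <;>
          simp [incut_pair_iff, hu, hv]
      · rw [dif_neg h]
        show (if InCut (optLift v S') (Sym2.map some e) then (1 : ℝ) else 0)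
          = if InCut S' e then (1 : ℝ) else 0
        clear h
        induction e using Sym2.ind with
        | _ a b =>
          simp only [Sym2.map_pair_eq, incut_pair_iff, mem_optLift_some]
    set p := Submodule.span ℝ (chi G '' {S : Set (Option V) | IsRoot G (some '' T) c S})
      with hp
    have hmapψ : Submodule.map ψ p = ⊤ := by
      rw [eq_top_iff, ← hfw'.2.2, Submodule.span_le]
      rintro x ⟨S', hS', rfl⟩
      exact Submodule.mem_map.mpr ⟨chi G (optLift v S'),
        Submodule.subset_span ⟨optLift v S', hrootL S' hS', rfl⟩, hψchi S'⟩
    have hex : ∃ S', IsRoot G' T c' S' ∧ InCut S' s(u, v) := by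
      by_contra hno
      push_neg at hno
      have hle : Submodule.span ℝ (chi G' '' {S : Set V | IsRoot G' T c' S})
          ≤ LinearMap.ker (LinearMap.proj (R := ℝ)
              (⟨s(u, v), G'.mem_edgeSet.mpr huv⟩ : ↥G'.edgeSet)) := by
        rw [Submodule.span_le]
        rintro x ⟨S', hS', rfl⟩
        simp only [SetLike.mem_coe, LinearMap.mem_ker, LinearMap.proj_apply]
        show (if InCut S' s(u, v) then (1 : ℝ) else 0) = 0
        exact if_neg (hno S' hS')
      rw [hfw'.2.2] at hle
      have h1 := hle (Submodule.mem_top (x := fun _ => (1 : ℝ)))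
      simp only [LinearMap.mem_ker, LinearMap.proj_apply] at h1
      exact one_ne_zero h1
    obtain ⟨S', hrootS', hcross⟩ := hex
    have hd_in : chi G (optLift v S') - chi G (optLift' v S') ∈ p :=
      sub_mem (Submodule.subset_span ⟨_, hrootL S' hrootS', rfl⟩)
        (Submodule.subset_span ⟨_, hrootL' S' hrootS' hcross, rfl⟩)
    have hchi4 : chi G (optLift v S') ⟨s(some u, none), heuw⟩ = 1 ∧
        chi G (optLift' v S') ⟨s(some u, none), heuw⟩ = 0 ∧
        chi G (optLift v S') ⟨s(some v, none), hevw⟩ = 0 ∧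
        chi G (optLift' v S') ⟨s(some v, none), hevw⟩ = 1 := by
      rcases incut_pair_iff.mp hcross with ⟨hu, hv⟩ | ⟨hv, hu⟩ <;>
        exact ⟨by show (if InCut (optLift v S') s(some u, none) then (1:ℝ) else 0) = 1;
                  simp [incut_pair_iff, hu, hv],
               by show (if InCut (optLift' v S') s(some u, none) then (1:ℝ) else 0) = 0;
                  simp [incut_pair_iff, hu, hv],
               by show (if InCut (optLift v S') s(some v, none) then (1:ℝ) else 0) = 0;
                  simp [incut_pair_iff, hu, hv],
               by show (if InCut (optLift' v S') s(some v, none) then (1:ℝ) else 0) = 1;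
                  simp [incut_pair_iff, hu, hv]⟩
    have hchi_old : ∀ a b (hab : s(some a, some b) ∈ G.edgeSet),
        chi G (optLift v S') ⟨s(some a, some b), hab⟩
          = chi G (optLift' v S') ⟨s(some a, some b), hab⟩ := by
      intro a b hab
      show (if InCut (optLift v S') s(some a, some b) then (1 : ℝ) else 0)
        = (if InCut (optLift' v S') s(some a, some b) then (1 : ℝ) else 0)
      simp only [incut_pair_iff, mem_optLift_some, mem_optLift'_some]
    have hker : LinearMap.ker ψ ≤ p := by
      intro z hz
      rw [LinearMap.mem_ker] at hz
      have hz0 : z ⟨s(some u, none), heuw⟩ + z ⟨s(some v, none), hevw⟩ = 0 := by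
        have h1 := congrFun hz (⟨s(u, v), G'.mem_edgeSet.mpr huv⟩ : ↥G'.edgeSet)
        rw [hψ, dif_pos rfl] at h1
        exact h1
      have hzold : ∀ (a b : V), G'.Adj a b → s(a, b) ≠ s(u, v) →
          ∀ (hmem : s(some a, some b) ∈ G.edgeSet), z ⟨s(some a, some b), hmem⟩ = 0 := by
        intro a b hab hne hmem
        have h1 := congrFun hz (⟨s(a, b), G'.mem_edgeSet.mpr hab⟩ : ↥G'.edgeSet)
        rw [hψ, dif_neg hne] at h1
        have h2 : (⟨Sym2.map some s(a, b),
            hmem_map s(a, b) (G'.mem_edgeSet.mpr hab) hne⟩ : ↥G.edgeSet)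
            = ⟨s(some a, some b), hmem⟩ := Subtype.ext (Sym2.map_pair_eq _ _ _)
        rw [h2] at h1
        exact h1
      have hzd : z = z ⟨s(some u, none), heuw⟩
          • (chi G (optLift v S') - chi G (optLift' v S')) := by
        funext e₀
        obtain ⟨e, he⟩ := e₀
        rcases hedge_cases e he with ⟨a, b, hab, hne, rfl⟩ | rfl | rfl
        · rw [Pi.smul_apply, Pi.sub_apply, hchi_old a b he, sub_self, smul_zero]
          exact hzold a b hab hne he
        · show z ⟨s(some u, none), heuw⟩ = _
          rw [Pi.smul_apply, Pi.sub_apply, hchi4.1, hchi4.2.1]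
          norm_num
        · show z ⟨s(some v, none), hevw⟩ = _
          rw [Pi.smul_apply, Pi.sub_apply, hchi4.2.2.1, hchi4.2.2.2]
          have : z ⟨s(some v, none), hevw⟩ = - z ⟨s(some u, none), heuw⟩ := by
            linarith [hz0]
          rw [this, smul_eq_mul]
          ring
      rw [hzd]
      exact Submodule.smul_mem _ _ hd_in
    exact span_top_aux ψ p hker hmapψ
end

section
/- Let (G, T) be a facet inducing Steiner graph whose graph G properly contains a Hamiltonian cycle C ⊊ E(G). Then E(G) \ C contains two edges that cross each other with respect to C (i.e., two chords ab and cd such that exactly one of c, d lies on one of the two arcs of C between a and b). -/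
open Classical

section CrossAuxSection

set_option linter.unusedSectionVars false

namespace CrossAux

variable {n : ℕ} [NeZero n]

lemma finSubVal (a b : Fin n) :
    (a - b).val = if b.val ≤ a.val then a.val - b.val else a.val + n - b.val := by
  rw [Fin.sub_def]
  show (n - b.val + a.val) % n = _
  have hb := b.isLt
  have ha := a.isLt
  split_ifs with h
  · have : n - b.val + a.val = (a.val - b.val) + n := by omega
    rw [this, Nat.add_mod_right, Nat.mod_eq_of_lt (by omega)]
  · rw [Nat.mod_eq_of_lt (by omega)]
    omega

lemma finValOne (hn : 3 ≤ n) : ((1 : Fin n) : ℕ) = 1 := by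
  rw [Fin.val_one']
  exact Nat.mod_eq_of_lt (by omega)

lemma finAddOneVal (hn : 3 ≤ n) (k : Fin n) :
    ((k + 1 : Fin n) : ℕ) = if k.val + 1 = n then 0 else k.val + 1 := by
  rw [Fin.add_def]
  show (k.val + (1 : Fin n).val) % n = _
  rw [finValOne hn]
  have hk := k.isLt
  split_ifs with h
  · rw [h, Nat.mod_self]
  · exact Nat.mod_eq_of_lt (by omega)

/-- `k` lies strictly inside the circular arc from `p` (exclusive) forwards to `q`
(exclusive). -/
def Arc (p q k : Fin n) : Prop := 0 < (k - p).val ∧ (k - p).val < (q - p).val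

lemma arc_asymm {p q k : Fin n} (h1 : Arc p q k) (h2 : Arc q p k) : False := by
  obtain ⟨a1, a2⟩ := h1; obtain ⟨b1, b2⟩ := h2
  simp only [finSubVal] at a1 a2 b1 b2
  have := p.isLt; have := q.isLt; have := k.isLt
  split_ifs at a1 a2 b1 b2 <;> omega

lemma arc_total {p q k : Fin n} (hpq : p ≠ q) (hkp : k ≠ p) (hkq : k ≠ q) :
    Arc p q k ∨ Arc q p k := by
  rw [Ne, Fin.ext_iff] at hpq hkp hkq
  unfold Arc
  simp only [finSubVal]
  have := p.isLt; have := q.isLt; have := k.isLt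
  split_ifs <;> omega

lemma arc_no_jump (hn : 3 ≤ n) {p q k : Fin n} (h1 : Arc p q k) (h2 : Arc q p (k + 1)) :
    False := by
  obtain ⟨a1, a2⟩ := h1; obtain ⟨b1, b2⟩ := h2
  simp only [finSubVal, finAddOneVal hn] at a1 a2 b1 b2
  have := p.isLt; have := q.isLt; have := k.isLt
  split_ifs at a1 a2 b1 b2 <;> omega

lemma arc_pred (hn : 3 ≤ n) {p q : Fin n} (hpq : p ≠ q) (h : q - 1 ≠ p) :
    Arc p q (q - 1) := by
  rw [Ne, Fin.ext_iff] at hpq h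
  unfold Arc
  simp only [finSubVal, finValOne hn] at *
  have := p.isLt; have := q.isLt
  split_ifs at * <;> omega

lemma arc_swap {z₁ z₂ p q : Fin n} (hp : Arc z₁ z₂ p) (hq : Arc z₂ z₁ q) :
    Arc p q z₂ ∧ Arc q p z₁ := by
  obtain ⟨a1, a2⟩ := hp; obtain ⟨b1, b2⟩ := hq
  unfold Arc
  simp only [finSubVal] at *
  have := p.isLt; have := q.isLt; have := z₁.isLt; have := z₂.isLt
  split_ifs at * <;> omega

lemma arc_linear {p q k : Fin n} (hpq : p < q) : Arc p q k ↔ (p < k ∧ k < q) := by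
  rw [Fin.lt_def] at hpq
  unfold Arc
  simp only [Fin.lt_def, finSubVal]
  have := p.isLt; have := q.isLt; have := k.isLt
  split_ifs <;> omega

variable {V : Type*}

lemma inCut_pair {S : Set V} {u v : V} :
    InCut S s(u, v) ↔ ((u ∈ S ∧ v ∉ S) ∨ (v ∈ S ∧ u ∉ S)) := by
  constructor
  · rintro ⟨a, b, he, ha, hb⟩
    rw [Sym2.eq_iff] at he
    rcases he with ⟨rfl, rfl⟩ | ⟨rfl, rfl⟩
    · exact Or.inl ⟨ha, hb⟩
    · exact Or.inr ⟨ha, hb⟩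
  · rintro (⟨h1, h2⟩ | ⟨h1, h2⟩)
    · exact ⟨u, v, rfl, h1, h2⟩
    · exact ⟨v, u, Sym2.eq_swap.symm, h1, h2⟩

lemma inCut_compl {S : Set V} {e : Sym2 V} : InCut Sᶜ e ↔ InCut S e := by
  unfold InCut
  constructor <;> rintro ⟨a, b, rfl, ha, hb⟩
  · exact ⟨b, a, Sym2.eq_swap.symm, by simpa using hb, by simpa using ha⟩
  · exact ⟨b, a, Sym2.eq_swap.symm, by simpa using hb, by simpa using ha⟩

lemma cutWeight_compl [Fintype V] [DecidableEq V] (G : SimpleGraph V)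
    (c : Sym2 V → ℤ) (S : Set V) : cutWeight G c Sᶜ = cutWeight G c S := by
  unfold cutWeight
  refine Finset.sum_congr rfl fun e _ => ?_
  rw [inCut_compl]

lemma isRoot_compl [Fintype V] [DecidableEq V] {G : SimpleGraph V} {T S : Set V}
    {c : Sym2 V → ℤ} (h : IsRoot G T c S) : IsRoot G T c Sᶜ := by
  obtain ⟨⟨⟨t₁, ht₁⟩, ⟨t₂, ht₂⟩⟩, hmin⟩ := h
  refine ⟨⟨⟨t₂, ht₂.1, ht₂.2⟩, ⟨t₁, ht₁.1, by simpa using ht₁.2⟩⟩, fun S' hS' => ?_⟩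
  rw [cutWeight_compl]
  exact hmin S' hS'

/-- From a walk between a `P`-vertex and a non-`P` vertex, extract an edge of the
walk crossing from `P` to non-`P`. -/
lemma walk_jump {G : SimpleGraph V} (P : V → Prop) :
    ∀ {u v : V} (W : G.Walk u v), P u → ¬ P v →
      ∃ x y, G.Adj x y ∧ x ∈ W.support ∧ y ∈ W.support ∧ P x ∧ ¬ P y := by
  intro u v W
  induction W with
  | nil => intro h h'; exact absurd h h'
  | @cons a b w h W ih =>
    intro hu hv
    by_cases hb : P b
    · obtain ⟨x, y, hxy, hx, hy, hPx, hPy⟩ := ih hb hv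
      exact ⟨x, y, hxy, by simp [SimpleGraph.Walk.support_cons, hx],
        by simp [SimpleGraph.Walk.support_cons, hy], hPx, hPy⟩
    · exact ⟨a, b, h, by simp [SimpleGraph.Walk.support_cons],
        by simp [SimpleGraph.Walk.support_cons, SimpleGraph.Walk.start_mem_support], hu, hb⟩

/-- Both sides of a root are connected: any two vertices of `S` are joined by a
walk staying inside `S`. -/
lemma root_reach [Fintype V] [DecidableEq V] {G : SimpleGraph V} (hconn : G.Connected)
    {T S : Set V} {c : Sym2 V → ℤ} (hc : ∀ e ∈ G.edgeSet, 0 < c e)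
    (hS : IsRoot G T c S) {u v : V} (hu : u ∈ S) (hv : v ∈ S) :
    ∃ W : G.Walk u v, ∀ x ∈ W.support, x ∈ S := by
  obtain ⟨⟨⟨s₀, hs₀T, hs₀S⟩, hTd⟩, hmin⟩ := hS
  set S₁ : Set V := {x | x ∈ S ∧ ∃ W : G.Walk s₀ x, ∀ y ∈ W.support, y ∈ S} with hS₁def
  have hS₁sub : S₁ ⊆ S := fun x hx => hx.1
  have hs₀S₁ : s₀ ∈ S₁ := by
    refine ⟨hs₀S, SimpleGraph.Walk.nil, ?_⟩
    intro y hy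
    rw [SimpleGraph.Walk.support_nil, List.mem_singleton] at hy
    exact hy ▸ hs₀S
  have hclosed : ∀ x y, x ∈ S₁ → G.Adj x y → y ∈ S → y ∈ S₁ := by
    rintro x y ⟨hxS, W, hW⟩ hadj hyS
    refine ⟨hyS, W.concat hadj, ?_⟩
    intro z hz
    rw [SimpleGraph.Walk.support_concat, List.mem_append] at hz
    rcases hz with hz | hz
    · exact hW z hz
    · simp only [List.mem_singleton] at hz; exact hz ▸ hyS
  have key : ∀ x ∈ S, x ∈ S₁ := by
    intro x hxS
    by_contra hx1
    have hsub : ∀ e, e ∈ G.edgeFinset → InCut S₁ e → InCut S e := by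
      rintro e he ⟨a, b, rfl, ha, hb⟩
      have hadj : G.Adj a b := by
        rw [SimpleGraph.mem_edgeFinset, SimpleGraph.mem_edgeSet] at he; exact he
      have hbS : b ∉ S := fun hbS => hb (hclosed a b ha hadj hbS)
      exact ⟨a, b, rfl, hS₁sub ha, hbS⟩
    have hle : ∀ e ∈ G.edgeFinset,
        (if InCut S₁ e then c e else 0) ≤ (if InCut S e then c e else 0) := by
      intro e he
      by_cases h1 : InCut S₁ e
      · rw [if_pos h1, if_pos (hsub e he h1)]
      · rw [if_neg h1]
        by_cases h2 : InCut S e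
        · rw [if_pos h2]
          exact (hc e (SimpleGraph.mem_edgeFinset.mp he)).le
        · rw [if_neg h2]
    obtain ⟨t₂, ht₂T, ht₂S⟩ := hTd
    have hSt₁ : IsSteinerCut T S₁ :=
      ⟨⟨s₀, hs₀T, hs₀S₁⟩, ⟨t₂, ht₂T, fun h => ht₂S (hS₁sub h)⟩⟩
    have hge : cutWeight G c S ≤ cutWeight G c S₁ := hmin S₁ hSt₁
    obtain ⟨Wx⟩ := hconn.preconnected x t₂
    obtain ⟨a, b, hadj, _, _, hPa, hPb⟩ :=
      walk_jump (fun z => z ∈ S ∧ z ∉ S₁) Wx ⟨hxS, hx1⟩ (fun h => ht₂S h.1)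
    have hbS : b ∉ S := by
      intro hbS
      have hbS₁ : b ∈ S₁ := by
        by_contra hbS₁
        exact hPb ⟨hbS, hbS₁⟩
      exact hPa.2 (hclosed b a hbS₁ hadj.symm hPa.1)
    have hestar : s(a, b) ∈ G.edgeFinset := SimpleGraph.mem_edgeFinset.mpr hadj
    have hcutS : InCut S s(a, b) := ⟨a, b, rfl, hPa.1, hbS⟩
    have hnot₁ : ¬ InCut S₁ s(a, b) := by
      rintro ⟨a', b', he, ha', hb'⟩
      rw [Sym2.eq_iff] at he
      rcases he with ⟨rfl, rfl⟩ | ⟨rfl, rfl⟩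
      · exact hPa.2 ha'
      · exact hbS (hS₁sub ha')
    have hstrict : cutWeight G c S₁ < cutWeight G c S := by
      refine Finset.sum_lt_sum hle ⟨s(a, b), hestar, ?_⟩
      rw [if_neg hnot₁, if_pos hcutS]
      exact hc _ (SimpleGraph.mem_edgeFinset.mp hestar)
    exact lt_irrefl _ (lt_of_le_of_lt hge hstrict)
  obtain ⟨_, Wu, hWu⟩ := key u hu
  obtain ⟨_, Wv, hWv⟩ := key v hv
  refine ⟨Wu.reverse.append Wv, ?_⟩
  intro x hx
  rw [SimpleGraph.Walk.mem_support_append_iff] at hx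
  rcases hx with hx | hx
  · rw [SimpleGraph.Walk.support_reverse, List.mem_reverse] at hx
    exact hWu x hx
  · exact hWv x hx

lemma chord_notC (hn : 3 ≤ n) (f : Fin n ≃ V) {C : Set (Sym2 V)}
    (hC : C = {e : Sym2 V | ∃ i : Fin n, e = s(f i, f (i + 1))})
    {P Q a b : Fin n} (ha : Arc P Q a) (hb : Arc Q P b) : s(f a, f b) ∉ C := by
  intro hmem
  rw [hC] at hmem
  obtain ⟨i, hi⟩ := hmem
  rw [Sym2.eq_iff] at hi
  rcases hi with ⟨hia, hib⟩ | ⟨hia, hib⟩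
  · have ha' : a = i := f.injective hia
    have hb' : b = a + 1 := by rw [ha']; exact f.injective hib
    exact arc_no_jump hn ha (hb' ▸ hb)
  · have hb' : b = i := f.injective hib
    have ha' : a = b + 1 := by rw [hb']; exact f.injective hia
    exact arc_no_jump hn hb (ha' ▸ ha)

/-- The key construction: two distinct "descents" of a set `S` whose two sides are
connected produce a pair of crossing chords. -/
lemma crossing_construct {G : SimpleGraph V} (hn : 3 ≤ n) (f : Fin n ≃ V)
    {C : Set (Sym2 V)} (hC : C = {e : Sym2 V | ∃ i : Fin n, e = s(f i, f (i + 1))})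
    {S : Set V}
    (hreach : ∀ u ∈ S, ∀ v ∈ S, ∃ W : G.Walk u v, ∀ x ∈ W.support, x ∈ S)
    (hreachc : ∀ u, u ∉ S → ∀ v, v ∉ S → ∃ W : G.Walk u v, ∀ x ∈ W.support, x ∉ S)
    {d₁ d₂ : Fin n} (hd : d₁ ≠ d₂)
    (h₁ : f d₁ ∈ S) (h₁' : f (d₁ + 1) ∉ S) (h₂ : f d₂ ∈ S) (h₂' : f (d₂ + 1) ∉ S) :
    ∃ e₁ ∈ G.edgeSet \ C, ∃ e₂ ∈ G.edgeSet \ C, e₁ ≠ e₂ ∧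
      ∃ i₁ j₁ i₂ j₂ : Fin n, i₁ < j₁ ∧ i₂ < j₂ ∧
        e₁ = s(f i₁, f j₁) ∧ e₂ = s(f i₂, f j₂) ∧
        ((i₁ < i₂ ∧ i₂ < j₁) ↔ ¬ (i₁ < j₂ ∧ j₂ < j₁)) := by
  set z₁ := d₁ + 1 with hz₁def
  set z₂ := d₂ + 1 with hz₂def
  have hz : z₁ ≠ z₂ := fun h => hd (add_right_cancel h)
  have harc₂ : Arc z₁ z₂ d₂ := by
    have h1 : z₂ - 1 = d₂ := by rw [hz₂def, add_sub_cancel_right]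
    have h2 : z₂ - 1 ≠ z₁ := by rw [h1]; exact fun h => h₁' (h ▸ h₂)
    have := arc_pred hn hz h2
    rwa [h1] at this
  have harc₁ : Arc z₂ z₁ d₁ := by
    have h1 : z₁ - 1 = d₁ := by rw [hz₁def, add_sub_cancel_right]
    have h2 : z₁ - 1 ≠ z₂ := by rw [h1]; exact fun h => h₂' (h ▸ h₁)
    have := arc_pred hn hz.symm h2
    rwa [h1] at this
  obtain ⟨W₁, hW₁⟩ := hreach (f d₂) h₂ (f d₁) h₁
  obtain ⟨x, y, hadj, hxsup, hysup, hPx, hPy⟩ :=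
    walk_jump (fun v => Arc z₁ z₂ (f.symm v)) W₁
      (by simpa using harc₂)
      (by simp only [Equiv.symm_apply_apply]; exact fun h => arc_asymm h harc₁)
  have hxS := hW₁ x hxsup
  have hyS := hW₁ y hysup
  set p := f.symm x with hpdef
  set q := f.symm y with hqdef
  have hfp : f p = x := f.apply_symm_apply x
  have hfq : f q = y := f.apply_symm_apply y
  have hqz₁ : q ≠ z₁ := fun h => h₁' (by rw [← h, hfq]; exact hyS)
  have hqz₂ : q ≠ z₂ := fun h => h₂' (by rw [← h, hfq]; exact hyS)
  have hArcp : Arc z₁ z₂ p := hPx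
  have hArcq : Arc z₂ z₁ q := (arc_total hz hqz₁ hqz₂).resolve_left hPy
  have hpq : p ≠ q := fun h => arc_asymm (h ▸ hArcp) hArcq
  have he₁E : s(x, y) ∈ G.edgeSet := (SimpleGraph.mem_edgeSet G).mpr hadj
  have he₁C : s(x, y) ∉ C := by
    rw [← hfp, ← hfq]; exact chord_notC hn f hC hArcp hArcq
  obtain ⟨hz₂arc, hz₁arc⟩ := arc_swap hArcp hArcq
  obtain ⟨W₂, hW₂⟩ := hreachc (f z₂) h₂' (f z₁) h₁'
  obtain ⟨x', y', hadj', hxsup', hysup', hPx', hPy'⟩ :=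
    walk_jump (fun v => Arc p q (f.symm v)) W₂
      (by simpa using hz₂arc)
      (by simp only [Equiv.symm_apply_apply]; exact fun h => arc_asymm h hz₁arc)
  have hx'S := hW₂ x' hxsup'
  have hy'S := hW₂ y' hysup'
  set p' := f.symm x' with hp'def
  set q' := f.symm y' with hq'def
  have hfp' : f p' = x' := f.apply_symm_apply x'
  have hfq' : f q' = y' := f.apply_symm_apply y'
  have hq'p : q' ≠ p := fun h => hy'S (by rw [← hfq', h, hfp]; exact hxS)
  have hq'q : q' ≠ q := fun h => hy'S (by rw [← hfq', h, hfq]; exact hyS)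
  have hArcp' : Arc p q p' := hPx'
  have hArcq' : Arc q p q' := (arc_total hpq hq'p hq'q).resolve_left hPy'
  have hp'q' : p' ≠ q' := fun h => (hadj'.ne) (by rw [← hfp', ← hfq', h])
  have he₂E : s(x', y') ∈ G.edgeSet := (SimpleGraph.mem_edgeSet G).mpr hadj'
  have he₂C : s(x', y') ∉ C := by
    rw [← hfp', ← hfq']; exact chord_notC hn f hC hArcp' hArcq'
  have hne12 : s(x, y) ≠ s(x', y') := by
    intro h; rw [Sym2.eq_iff] at h
    rcases h with ⟨h1, _⟩ | ⟨h1, _⟩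
    · exact hx'S (h1 ▸ hxS)
    · exact hy'S (h1 ▸ hxS)
  refine ⟨s(x, y), ⟨he₁E, he₁C⟩, s(x', y'), ⟨he₂E, he₂C⟩, hne12, ?_⟩
  rcases lt_or_gt_of_ne hpq with hlt | hgt
  · have hin : p < p' ∧ p' < q := (arc_linear hlt).mp hArcp'
    have hout : ¬ (p < q' ∧ q' < q) := fun h => arc_asymm ((arc_linear hlt).mpr h) hArcq'
    rcases lt_or_gt_of_ne hp'q' with h2 | h2
    · exact ⟨p, q, p', q', hlt, h2, by rw [hfp, hfq], by rw [hfp', hfq'],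
        ⟨fun _ => hout, fun _ => hin⟩⟩
    · exact ⟨p, q, q', p', hlt, h2, by rw [hfp, hfq],
        by rw [hfq', hfp']; exact Sym2.eq_swap,
        iff_of_false hout (not_not_intro hin)⟩
  · have hin : q < q' ∧ q' < p := (arc_linear hgt).mp hArcq'
    have hout : ¬ (q < p' ∧ p' < p) := fun h => arc_asymm ((arc_linear hgt).mpr h) hArcp'
    rcases lt_or_gt_of_ne hp'q' with h2 | h2
    · exact ⟨q, p, p', q', hgt, h2, by rw [hfq, hfp]; exact Sym2.eq_swap,
        by rw [hfp', hfq'], iff_of_false hout (not_not_intro hin)⟩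
    · exact ⟨q, p, q', p', hgt, h2, by rw [hfq, hfp]; exact Sym2.eq_swap,
        by rw [hfq', hfp']; exact Sym2.eq_swap, ⟨fun _ => hout, fun _ => hin⟩⟩

lemma span_contra [Fintype V] [DecidableEq V] (G : SimpleGraph V) (T : Set V)
    (c : Sym2 V → ℤ) (w : Sym2 V → ℝ)
    (hw : ∀ S : Set V, IsRoot G T c S →
      (∑ e ∈ G.edgeFinset, if InCut S e then w e else 0) = 0)
    {e₀ : Sym2 V} (he₀ : e₀ ∈ G.edgeSet) (hne : w e₀ ≠ 0)
    (hspan : Submodule.span ℝ (chi G '' {S : Set V | IsRoot G T c S}) = ⊤) : False := by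
  let φ : (↥G.edgeSet → ℝ) →ₗ[ℝ] ℝ :=
    { toFun := fun x => ∑ e : ↥G.edgeSet, w e.val * x e
      map_add' := by
        intro x y
        simp only [Pi.add_apply, mul_add]
        rw [Finset.sum_add_distrib]
      map_smul' := by
        intro m x
        simp only [Pi.smul_apply, smul_eq_mul, RingHom.id_apply, Finset.mul_sum]
        exact Finset.sum_congr rfl fun e _ => by ring }
  have hker : Submodule.span ℝ (chi G '' {S : Set V | IsRoot G T c S}) ≤ LinearMap.ker φ := by
    rw [Submodule.span_le]
    rintro z ⟨S, hS, rfl⟩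
    simp only [SetLike.mem_coe, LinearMap.mem_ker]
    show (∑ e : ↥G.edgeSet, w e.val * chi G S e) = 0
    have h1 : ∀ e : ↥G.edgeSet, w e.val * chi G S e = if InCut S e.val then w e.val else 0 := by
      intro e
      unfold chi
      split_ifs <;> ring
    rw [Finset.sum_congr rfl fun e _ => h1 e,
      ← Finset.sum_subtype G.edgeFinset (fun x => SimpleGraph.mem_edgeFinset)
        (fun e => if InCut S e then w e else 0)]
    exact hw S hS
  rw [hspan] at hker
  have h0 : φ (fun e => if e.val = e₀ then 1 else 0) = 0 :=
    LinearMap.mem_ker.mp (hker Submodule.mem_top)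
  have hval : φ (fun e => if e.val = e₀ then 1 else 0) = w e₀ := by
    show (∑ e : ↥G.edgeSet, w e.val * (if e.val = e₀ then 1 else 0)) = w e₀
    rw [Finset.sum_eq_single (⟨e₀, he₀⟩ : ↥G.edgeSet)]
    · simp
    · intro b _ hb
      have : b.val ≠ e₀ := fun h => hb (Subtype.ext h)
      simp [this]
    · intro h; exact absurd (Finset.mem_univ _) h
  exact hne (hval ▸ h0)

end CrossAux

end CrossAuxSection

/-- If a facet inducing Steiner graph `(G, T)` properly contains a Hamiltonian cycle
`C ⊊ E(G)` (given by a cyclic enumeration `f : Fin n ≃ V` of the vertices), then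
`E(G) \ C` contains two chords that cross each other with respect to `C`: chords with
endpoint positions `i₁ < j₁` and `i₂ < j₂` such that exactly one of `i₂`, `j₂` lies
strictly between `i₁` and `j₁`. -/
theorem hamiltonian_cycle_crossing_chords {V : Type*} [Fintype V] [DecidableEq V]
    (G : SimpleGraph V) (hconn : G.Connected) (T : Set V) (hT : 2 ≤ T.ncard)
    (c : Sym2 V → ℤ) (hfw : FacetWeights G T c)
    (n : ℕ) [NeZero n] (hn : 3 ≤ n) (f : Fin n ≃ V)
    (hcyc : ∀ i : Fin n, G.Adj (f i) (f (i + 1)))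
    (C : Set (Sym2 V)) (hC : C = {e : Sym2 V | ∃ i : Fin n, e = s(f i, f (i + 1))})
    (hproper : C ⊂ G.edgeSet) :
    ∃ e₁ ∈ G.edgeSet \ C, ∃ e₂ ∈ G.edgeSet \ C, e₁ ≠ e₂ ∧
      ∃ i₁ j₁ i₂ j₂ : Fin n, i₁ < j₁ ∧ i₂ < j₂ ∧
        e₁ = s(f i₁, f j₁) ∧ e₂ = s(f i₂, f j₂) ∧
        ((i₁ < i₂ ∧ i₂ < j₁) ↔ ¬ (i₁ < j₂ ∧ j₂ < j₁)) := by
  classical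
  by_contra hcross
  obtain ⟨e₀, he₀E, he₀C⟩ := Set.exists_of_ssubset hproper
  -- two distinct terminals
  obtain ⟨t₁, t₂, ht₁, ht₂, htne⟩ :=
    (Set.one_lt_ncard_iff (Set.toFinite T)).mp (lt_of_lt_of_le one_lt_two hT)
  -- a minimum-weight Steiner cut exists, i.e. a root exists
  have hnonneg : ∀ S : Set V, 0 ≤ cutWeight G c S := by
    intro S
    refine Finset.sum_nonneg fun e he => ?_
    by_cases h : InCut S e
    · rw [if_pos h]; exact (hfw.1 e (SimpleGraph.mem_edgeFinset.mp he)).le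
    · rw [if_neg h]
  obtain ⟨μ, ⟨S₀, hS₀st, hS₀w⟩, hleast⟩ :=
    Int.exists_least_of_bdd (P := fun z => ∃ S : Set V, IsSteinerCut T S ∧ cutWeight G c S = z)
      ⟨0, fun z ⟨S, _, hz⟩ => hz ▸ hnonneg S⟩
      ⟨cutWeight G c {t₁}, {t₁}, ⟨⟨t₁, ht₁, Set.mem_singleton t₁⟩,
        ⟨t₂, ht₂, fun h => htne (Set.mem_singleton_iff.mp h).symm⟩⟩, rfl⟩
  have hS₀root : IsRoot G T c S₀ :=
    ⟨hS₀st, fun S' hS' => hS₀w ▸ hleast _ ⟨S', hS', rfl⟩⟩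
  -- the hyperplane vector
  set w : Sym2 V → ℝ := fun e => (if e ∈ C then (μ : ℝ) else 0) - 2 * (c e : ℝ) with hwdef
  have hwne : w e₀ ≠ 0 := by
    have hpos : (0 : ℝ) < (c e₀ : ℝ) := by exact_mod_cast hfw.1 e₀ he₀E
    rw [hwdef]
    simp only [if_neg he₀C]
    intro h
    nlinarith
  -- all roots are orthogonal to w
  have hw : ∀ S : Set V, IsRoot G T c S →
      (∑ e ∈ G.edgeFinset, if InCut S e then w e else 0) = 0 := by
    intro S hS
    have hwS : cutWeight G c S = μ := by
      refine le_antisymm ?_ (hleast _ ⟨S, hS.1, rfl⟩)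
      rw [← hS₀w]
      exact hS.2 S₀ hS₀st
    -- descents and ascents
    set Am : Finset (Fin n) := Finset.univ.filter (fun k => f k ∈ S ∧ f (k + 1) ∉ S) with hAm
    set Ap : Finset (Fin n) := Finset.univ.filter (fun k => f k ∉ S ∧ f (k + 1) ∈ S) with hAp
    have hcards : Am.card = Ap.card := by
      have h2 : (∑ k : Fin n, if f (k + 1) ∈ S then (1 : ℤ) else 0)
          = ∑ k : Fin n, if f k ∈ S then (1 : ℤ) else 0 := by
        have := Equiv.sum_comp (Equiv.addRight (1 : Fin n))
          (fun k => if f k ∈ S then (1 : ℤ) else 0)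
        simp only [Equiv.coe_addRight] at this
        convert this <;> rfl
      have htel : (∑ k : Fin n, ((if f k ∈ S then (1 : ℤ) else 0)
          - (if f (k + 1) ∈ S then (1 : ℤ) else 0))) = 0 := by
        rw [Finset.sum_sub_distrib, h2, sub_self]
      have hpt : ∀ k : Fin n, ((if f k ∈ S then (1 : ℤ) else 0)
            - (if f (k + 1) ∈ S then (1 : ℤ) else 0))
          = (if f k ∈ S ∧ f (k + 1) ∉ S then (1 : ℤ) else 0)
            - (if f k ∉ S ∧ f (k + 1) ∈ S then (1 : ℤ) else 0) := by
        intro k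
        by_cases h1 : f k ∈ S <;> by_cases h3 : f (k + 1) ∈ S <;> simp [h1, h3]
      rw [Finset.sum_congr rfl fun k _ => hpt k, Finset.sum_sub_distrib,
        Finset.sum_boole, Finset.sum_boole, sub_eq_zero] at htel
      exact_mod_cast htel
    obtain ⟨⟨sA, hsAT, hsAS⟩, ⟨tB, htBT, htBS⟩⟩ := hS.1
    have hdesc_ne : Am.Nonempty := by
      by_contra hempty
      rw [Finset.not_nonempty_iff_eq_empty] at hempty
      have hstep : ∀ k : Fin n, f k ∈ S → f (k + 1) ∈ S := by
        intro k hk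
        by_contra hk1
        have hkmem : k ∈ Am := Finset.mem_filter.mpr ⟨Finset.mem_univ k, hk, hk1⟩
        rw [hempty] at hkmem
        exact absurd hkmem (Finset.notMem_empty k)
      have hk₀ : f (f.symm sA) ∈ S := by rw [f.apply_symm_apply]; exact hsAS
      open Fin.NatCast in
      have hall : ∀ m : ℕ, f (f.symm sA + (m : Fin n)) ∈ S := by
        intro m
        induction m with
        | zero => simpa using hk₀
        | succ m ih =>
          have hcast : ((m + 1 : ℕ) : Fin n) = (m : Fin n) + 1 := by push_cast; ring
          rw [hcast, ← add_assoc]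
          exact hstep _ ih
      open Fin.NatCast in
      have : tB ∈ S := by
        have h3 : f (f.symm sA + (((f.symm tB - f.symm sA) : Fin n).val : Fin n)) ∈ S := hall _
        rw [Fin.cast_val_eq_self, add_comm, sub_add_cancel, f.apply_symm_apply] at h3
        exact h3
      exact htBS this
    have hcard_le : Am.card ≤ 1 := by
      by_contra hgt
      push_neg at hgt
      obtain ⟨d₁, hd₁, d₂, hd₂, hdne⟩ := Finset.one_lt_card.mp hgt
      rw [hAm, Finset.mem_filter] at hd₁ hd₂
      have hreach : ∀ u ∈ S, ∀ v ∈ S, ∃ W : G.Walk u v, ∀ x ∈ W.support, x ∈ S :=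
        fun u hu v hv => CrossAux.root_reach hconn hfw.1 hS hu hv
      have hSc := CrossAux.isRoot_compl hS
      have hreachc : ∀ u, u ∉ S → ∀ v, v ∉ S →
          ∃ W : G.Walk u v, ∀ x ∈ W.support, x ∉ S := by
        intro u hu v hv
        obtain ⟨W, hW⟩ := CrossAux.root_reach hconn hfw.1 hSc
          (Set.mem_compl hu) (Set.mem_compl hv)
        exact ⟨W, fun x hx => hW x hx⟩
      exact hcross (CrossAux.crossing_construct hn f hC hreach hreachc hdne
        hd₁.2.1 hd₁.2.2 hd₂.2.1 hd₂.2.2)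
    have hcardm : Am.card = 1 :=
      le_antisymm hcard_le (Finset.card_pos.mpr hdesc_ne)
    have hcardp : Ap.card = 1 := hcards ▸ hcardm
    -- the number of cut cycle-edges equals 2
    have hNK : (G.edgeFinset.filter (fun e => InCut S e ∧ e ∈ C)).card = 2 := by
      have hbij : (Finset.univ.filter (fun k : Fin n =>
            (f k ∈ S ∧ f (k + 1) ∉ S) ∨ (f k ∉ S ∧ f (k + 1) ∈ S))).card
          = (G.edgeFinset.filter (fun e => InCut S e ∧ e ∈ C)).card := by
        refine Finset.card_bij (fun k _ => s(f k, f (k + 1))) ?_ ?_ ?_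
        · intro k hk
          rw [Finset.mem_filter] at hk
          refine Finset.mem_filter.mpr ⟨SimpleGraph.mem_edgeFinset.mpr
            ((SimpleGraph.mem_edgeSet G).mpr (hcyc k)), ?_, ?_⟩
          · exact CrossAux.inCut_pair.mpr (by tauto)
          · rw [hC]; exact ⟨k, rfl⟩
        · intro k₁ h₁ k₂ h₂ heq
          rw [Sym2.eq_iff] at heq
          rcases heq with ⟨ha, _⟩ | ⟨ha, hb⟩
          · exact f.injective ha
          · exfalso
            have e1 : k₁ = k₂ + 1 := f.injective ha
            have e2 : k₂ = k₁ + 1 := (f.injective hb).symm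
            rw [e2] at e1
            have hv := congrArg Fin.val e1
            rw [CrossAux.finAddOneVal hn, CrossAux.finAddOneVal hn] at hv
            have := k₁.isLt
            split_ifs at hv <;> omega
        · intro e he
          rw [Finset.mem_filter] at he
          obtain ⟨heEF, hcut, heC⟩ := he
          rw [hC] at heC
          obtain ⟨k, hk⟩ := heC
          refine ⟨k, Finset.mem_filter.mpr ⟨Finset.mem_univ _, ?_⟩, hk.symm⟩
          rw [hk] at hcut
          rcases CrossAux.inCut_pair.mp hcut with h | h
          · exact Or.inl h
          · exact Or.inr ⟨h.2, h.1⟩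
      rw [← hbij, Finset.filter_or, Finset.card_union_of_disjoint, ← hAm, ← hAp,
        hcardm, hcardp]
      rw [← hAm, ← hAp]
      exact Finset.disjoint_left.mpr fun k hk hk' => by
        rw [hAm, Finset.mem_filter] at hk
        rw [hAp, Finset.mem_filter] at hk'
        exact hk'.2.1 hk.2.1
    -- now compute the weighted sum
    have hsplit : (∑ e ∈ G.edgeFinset, if InCut S e then w e else 0)
        = (∑ e ∈ G.edgeFinset, if InCut S e ∧ e ∈ C then (μ : ℝ) else 0)
          - (∑ e ∈ G.edgeFinset, if InCut S e then 2 * (c e : ℝ) else 0) := by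
      rw [← Finset.sum_sub_distrib]
      refine Finset.sum_congr rfl fun e _ => ?_
      rw [hwdef]
      by_cases h1 : InCut S e <;> by_cases h2 : e ∈ C <;> simp [h1, h2]
    have hfirst : (∑ e ∈ G.edgeFinset, if InCut S e ∧ e ∈ C then (μ : ℝ) else 0)
        = 2 * (μ : ℝ) := by
      rw [← Finset.sum_filter, Finset.sum_const, hNK]
      simp [nsmul_eq_mul]
    have hsecond : (∑ e ∈ G.edgeFinset, if InCut S e then 2 * (c e : ℝ) else 0)
        = 2 * (μ : ℝ) := by
      have : ∀ e, (if InCut S e then 2 * (c e : ℝ) else 0)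
          = 2 * ((if InCut S e then c e else 0 : ℤ) : ℝ) := by
        intro e
        by_cases h : InCut S e <;> simp [h]
      rw [Finset.sum_congr rfl fun e _ => this e, ← Finset.mul_sum]
      congr 1
      rw [← Int.cast_sum]
      exact_mod_cast congrArg (fun z : ℤ => (z : ℝ)) hwS
    rw [hsplit, hfirst, hsecond, sub_self]
  exact CrossAux.span_contra G T c w hw he₀E hwne hfw.2.2
end
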